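/- arXiv:1203.4871 — 10 statements merged into one kernel-verified Lean document; each statement's English description precedes it below -/
import Mathlib

section
/- Let (Z_n)_{n∈ℤ} be a stochastic process with values in ℝ^r, and let X₀ be an ℝ^q-valued random variable on the same probability space with |X₀|₁ ≤ M almost surely for some constant M > 0. Suppose there are a non-increasing function Φ : (0,∞) → (0,∞), nonnegative reals (a_k)_{k∈ℕ}, and measurable functions f_k : ℝ^{r×(2k+1)} → ℝ^q such that P(|X₀ − f_k(Z_{−k},…,Z_k)|₁ > ε) ≤ a_k Φ(ε) for all k ∈ ℕ and ε > 0. Then for every p ≥ 1 there exists a constant C > 0, depending only on M and p, such that for all k ∈ ℕ and all ε > 0: E|X₀ − E(X₀ | 𝔉_{−k}^k)|_p^p ≤ C (a_k Φ(ε) + ε), where 𝔉_{−k}^k = σ(Z_{−k},…,Z_k). In particular, if a_k → 0 then E|X₀ − E(X₀ | 𝔉_{−k}^k)|_p^p → 0 as k → ∞, and if moreover (s_k)_{k∈ℕ} is a sequence of nonnegative numbers with a_k Φ(s_k) = O(s_k), then E|X₀ − E(X₀ | 𝔉_{−k}^k)|_p^p = O(s_k) as k → ∞. -/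
open MeasureTheory Filter

/-! If `g` is `𝔉 = 𝔉_{−k}^k`-measurable, then conditional expectation is an `L¹`-contraction
fixing `g`, so `‖X₀ − E(X₀|𝔉)‖₁ ≤ 2 ‖X₀ − g‖₁`. Truncating each coordinate of
`g = f_k(Z_{−k},…,Z_k)` to `[-M, M]` only brings it closer to `X₀` and makes `|X₀ − g|₁ ≤ 2qM`,
hence `‖X₀ − g‖₁ ≤ ε + 2qM · P(|X₀ − g|₁ > ε) ≤ ε + 2qM · a_k Φ(ε)`. Finally `X₀` and
`E(X₀|𝔉)` are both bounded by `M`, so `|X₀ − E(X₀|𝔉)|^p ≤ (2M)^{p-1} |X₀ − E(X₀|𝔉)|`. -/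

/-- The σ-field generated by the window `Z_{−k},…,Z_k` of the process `Z`. -/
def sigmaWindow {Ω : Type*} {r : ℕ} (Z : ℤ → Ω → (Fin r → ℝ)) (k : ℕ) :
    MeasurableSpace Ω :=
  MeasurableSpace.comap (fun ω => fun j : Fin (2 * k + 1) => Z ((j : ℤ) - k) ω) inferInstance

def clamp (M x : ℝ) : ℝ := max (-M) (min M x)

lemma abs_clamp_le {M : ℝ} (hM : 0 ≤ M) (x : ℝ) : |clamp M x| ≤ M :=
  abs_le.2 ⟨le_max_left _ _, max_le (by linarith) (min_le_left _ _)⟩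

lemma clamp_of_abs_le {M x : ℝ} (hx : |x| ≤ M) : clamp M x = x := by
  rw [abs_le] at hx
  rw [clamp, min_eq_right hx.2, max_eq_right hx.1]

lemma abs_sub_clamp_le {M x y : ℝ} (hx : |x| ≤ M) : |x - clamp M y| ≤ |x - y| := by
  conv_lhs => rw [← clamp_of_abs_le hx, clamp, clamp, max_comm (-M), max_comm (-M)]
  refine (abs_max_sub_max_le_abs _ _ _).trans ?_
  simpa using abs_min_sub_min_le_max M x M y

@[fun_prop]
lemma measurable_clamp (M : ℝ) : Measurable (clamp M) :=
  measurable_const.max (measurable_const.min measurable_id)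

lemma rpow_le_rpow_sub_one_mul {y L p : ℝ} (hy : 0 ≤ y) (hyL : y ≤ L) (hp : 1 ≤ p) :
    y ^ p ≤ L ^ (p - 1) * y := by
  calc y ^ p = y ^ (p - 1) * y := by
        rw [← Real.rpow_add_one' hy (by linarith), sub_add_cancel]
    _ ≤ L ^ (p - 1) * y := by gcongr

lemma integral_le_add_mul_measureReal_lt {Ω : Type*} [MeasurableSpace Ω] {μ : Measure Ω}
    [IsProbabilityMeasure μ] {D : Ω → ℝ} {K ε : ℝ} (hD : Measurable D) (hD0 : 0 ≤ᵐ[μ] D)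
    (hDK : ∀ᵐ ω ∂μ, D ω ≤ K) (hε : 0 ≤ ε) :
    ∫ ω, D ω ∂μ ≤ ε + K * μ.real {ω | ε < D ω} := by
  set S := {ω | ε < D ω}
  have hS : MeasurableSet S := measurableSet_lt measurable_const hD
  calc ∫ ω, D ω ∂μ ≤ ∫ ω, (ε + S.indicator (fun _ => K) ω) ∂μ := by
        refine integral_mono_of_nonneg hD0
          ((integrable_const ε).add ((integrable_const K).indicator hS)) ?_
        filter_upwards [hDK] with ω hω
        by_cases hωS : ω ∈ S
        · simp only [Set.indicator_of_mem hωS]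
          linarith
        · simp only [Set.indicator_of_notMem hωS]
          exact (not_lt.1 hωS).trans (by simp)
    _ = ε + K * μ.real S := by
        rw [integral_add (integrable_const ε) ((integrable_const K).indicator hS),
          integral_indicator_const _ hS]
        simp [mul_comm]

section CondExp

variable {Ω : Type*} {m m0 : MeasurableSpace Ω} {μ : Measure Ω}

lemma integral_abs_sub_condExp_le_two_mul (hm : m ≤ m0) [SigmaFinite (μ.trim hm)]
    {X h : Ω → ℝ} (hX : Integrable X μ) (hh : StronglyMeasurable[m] h) (hhi : Integrable h μ) :
    ∫ ω, |X ω - μ[X | m] ω| ∂μ ≤ 2 * ∫ ω, |X ω - h ω| ∂μ := by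
  have hce : Integrable (μ[X | m]) μ := integrable_condExp
  have hcontract : ∫ ω, |h ω - μ[X | m] ω| ∂μ ≤ ∫ ω, |X ω - h ω| ∂μ := by
    have hsub : μ[h - X | m] =ᵐ[μ] fun ω => h ω - μ[X | m] ω := by
      filter_upwards [condExp_sub hhi hX m] with ω hω
      rw [hω, Pi.sub_apply, condExp_of_stronglyMeasurable hm hh hhi]
    calc ∫ ω, |h ω - μ[X | m] ω| ∂μ = ∫ ω, |μ[h - X | m] ω| ∂μ :=
          integral_congr_ae (hsub.mono fun ω hω => by simp only [hω])
      _ ≤ ∫ ω, |h ω - X ω| ∂μ := integral_abs_condExp_le _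
      _ = ∫ ω, |X ω - h ω| ∂μ := by simp_rw [abs_sub_comm]
  calc ∫ ω, |X ω - μ[X | m] ω| ∂μ ≤ ∫ ω, (|X ω - h ω| + |h ω - μ[X | m] ω|) ∂μ :=
        integral_mono (hX.sub hce).abs ((hX.sub hhi).abs.add (hhi.sub hce).abs)
          fun ω => abs_sub_le _ _ _
    _ = ∫ ω, |X ω - h ω| ∂μ + ∫ ω, |h ω - μ[X | m] ω| ∂μ :=
        integral_add (hX.sub hhi).abs (hhi.sub hce).abs
    _ ≤ 2 * ∫ ω, |X ω - h ω| ∂μ := by linarith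

variable {ι : Type*} [Fintype ι]

lemma integral_sum_abs_sub_condExp_rpow_le (hm : m ≤ m0) [SigmaFinite (μ.trim hm)]
    {X h : Ω → ι → ℝ} {M p : ℝ} (hX : ∀ i, Integrable (X · i) μ) (hM : 0 ≤ M)
    (hXM : ∀ᵐ ω ∂μ, ∀ i, |X ω i| ≤ M) (hh : ∀ i, StronglyMeasurable[m] (h · i))
    (hhi : ∀ i, Integrable (h · i) μ) (hp : 1 ≤ p) :
    ∫ ω, ∑ i, |X ω i - μ[(X · i) | m] ω| ^ p ∂μ
      ≤ 2 * (2 * M) ^ (p - 1) * ∫ ω, ∑ i, |X ω i - h ω i| ∂μ := by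
  have hceM : ∀ᵐ ω ∂μ, ∀ i, |μ[(X · i) | m] ω| ≤ M :=
    ae_all_iff.2 fun i => ae_bdd_abs_condExp_of_ae_bdd_abs (hXM.mono fun ω hω => hω i)
  have hpow : ∀ᵐ ω ∂μ, ∑ i, |X ω i - μ[(X · i) | m] ω| ^ p
      ≤ (2 * M) ^ (p - 1) * ∑ i, |X ω i - μ[(X · i) | m] ω| := by
    filter_upwards [hXM, hceM] with ω hXω hceω
    rw [Finset.mul_sum]
    refine Finset.sum_le_sum fun i _ => rpow_le_rpow_sub_one_mul (abs_nonneg _) ?_ hp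
    linarith [abs_sub (X ω i) (μ[(X · i) | m] ω), hXω i, hceω i]
  have hint : ∀ i, Integrable (fun ω => |X ω i - μ[(X · i) | m] ω|) μ :=
    fun i => ((hX i).sub integrable_condExp).abs
  calc ∫ ω, ∑ i, |X ω i - μ[(X · i) | m] ω| ^ p ∂μ
      ≤ ∫ ω, (2 * M) ^ (p - 1) * ∑ i, |X ω i - μ[(X · i) | m] ω| ∂μ :=
        integral_mono_of_nonneg (ae_of_all _ fun ω => by positivity)
          ((integrable_finsetSum _ fun i _ => hint i).const_mul _) hpow
    _ = (2 * M) ^ (p - 1) * ∑ i, ∫ ω, |X ω i - μ[(X · i) | m] ω| ∂μ := by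
        rw [integral_const_mul, integral_finsetSum _ fun i _ => hint i]
    _ ≤ (2 * M) ^ (p - 1) * ∑ i, 2 * ∫ ω, |X ω i - h ω i| ∂μ := by
        gcongr with i
        exact integral_abs_sub_condExp_le_two_mul hm (hX i) (hh i) (hhi i)
    _ = 2 * (2 * M) ^ (p - 1) * ∫ ω, ∑ i, |X ω i - h ω i| ∂μ := by
        have hint' : ∀ i, Integrable (fun ω => |X ω i - h ω i|) μ :=
          fun i => ((hX i).sub (hhi i)).abs
        rw [← Finset.mul_sum, integral_finsetSum _ fun i _ => hint' i]
        ring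

variable [IsProbabilityMeasure μ]

lemma integral_sum_abs_sub_clamp_le {X g : Ω → ι → ℝ} {M ε : ℝ} (hX : Measurable X)
    (hg : Measurable g) (hM : 0 ≤ M) (hXM : ∀ᵐ ω ∂μ, ∀ i, |X ω i| ≤ M) (hε : 0 ≤ ε) :
    ∫ ω, ∑ i, |X ω i - clamp M (g ω i)| ∂μ
      ≤ ε + 2 * Fintype.card ι * M * μ.real {ω | ε < ∑ i, |X ω i - g ω i|} := by
  have hK : ∀ᵐ ω ∂μ, ∑ i, |X ω i - clamp M (g ω i)| ≤ 2 * Fintype.card ι * M := by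
    filter_upwards [hXM] with ω hω
    calc ∑ i, |X ω i - clamp M (g ω i)| ≤ ∑ _i : ι, 2 * M := by
          refine Finset.sum_le_sum fun i _ => ?_
          linarith [abs_sub (X ω i) (clamp M (g ω i)), hω i, abs_clamp_le hM (g ω i)]
      _ = 2 * Fintype.card ι * M := by simp; ring
  have hsub : {ω | ε < ∑ i, |X ω i - clamp M (g ω i)|}
      ≤ᵐ[μ] {ω | ε < ∑ i, |X ω i - g ω i|} := by
    filter_upwards [hXM] with ω hω hlt
    exact hlt.trans_le (Finset.sum_le_sum fun i _ => abs_sub_clamp_le (hω i))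
  calc ∫ ω, ∑ i, |X ω i - clamp M (g ω i)| ∂μ
      ≤ ε + 2 * Fintype.card ι * M * μ.real {ω | ε < ∑ i, |X ω i - clamp M (g ω i)|} :=
        integral_le_add_mul_measureReal_lt (by fun_prop)
          (ae_of_all _ fun ω => by positivity) hK hε
    _ ≤ ε + 2 * Fintype.card ι * M * μ.real {ω | ε < ∑ i, |X ω i - g ω i|} := by
        gcongr ε + _ * ?_
        exact ENNReal.toReal_mono (measure_ne_top μ _) (measure_mono_ae hsub)

lemma integral_sum_abs_sub_condExp_rpow_le_of_measurable (hm : m ≤ m0)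
    {X g : Ω → ι → ℝ} {M p ε : ℝ} (hX : Measurable X) (hg : Measurable[m] g) (hM : 0 ≤ M)
    (hXM : ∀ᵐ ω ∂μ, ∀ i, |X ω i| ≤ M) (hp : 1 ≤ p) (hε : 0 ≤ ε) :
    ∫ ω, ∑ i, |X ω i - μ[(X · i) | m] ω| ^ p ∂μ
      ≤ 2 * (2 * M) ^ (p - 1)
        * (ε + 2 * Fintype.card ι * M * μ.real {ω | ε < ∑ i, |X ω i - g ω i|}) := by
  have hclamp : ∀ i, Measurable[m] fun ω => clamp M (g ω i) := fun i => by fun_prop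
  have hbounded {Y : Ω → ℝ} (hY : Measurable Y) (hYM : ∀ᵐ ω ∂μ, |Y ω| ≤ M) : Integrable Y μ :=
    (integrable_const M).mono' hY.aestronglyMeasurable (by simpa only [Real.norm_eq_abs])
  calc ∫ ω, ∑ i, |X ω i - μ[(X · i) | m] ω| ^ p ∂μ
      ≤ 2 * (2 * M) ^ (p - 1) * ∫ ω, ∑ i, |X ω i - clamp M (g ω i)| ∂μ :=
        integral_sum_abs_sub_condExp_rpow_le hm
          (fun i => hbounded (by fun_prop) (hXM.mono fun ω hω => hω i)) hM hXM
          (fun i => (hclamp i).stronglyMeasurable)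
          (fun i => hbounded ((hclamp i).mono hm le_rfl)
            (ae_of_all _ fun ω => abs_clamp_le hM _))
          hp
    _ ≤ _ := by
        gcongr
        exact integral_sum_abs_sub_clamp_le hX (hg.mono hm le_rfl) hM hXM hε

end CondExp

lemma tendsto_zero_of_forall_le_mul_add {I a : ℕ → ℝ} {Φ : ℝ → ℝ} {C : ℝ} (hI0 : ∀ k, 0 ≤ I k)
    (hI : ∀ k ε, 0 < ε → I k ≤ C * (a k * Φ ε + ε)) (ha : Tendsto a atTop (nhds 0)) :
    Tendsto I atTop (nhds 0) := by
  refine tendsto_order.2 ⟨fun b hb => Eventually.of_forall fun k => hb.trans_le (hI0 k),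
    fun δ hδ => ?_⟩
  obtain ⟨ε, hε, hCε⟩ := exists_pos_mul_lt hδ C
  have haΦ : Tendsto (fun k => C * (a k * Φ ε)) atTop (nhds 0) := by
    simpa using (ha.mul_const (Φ ε)).const_mul C
  filter_upwards [haΦ.eventually (gt_mem_nhds (sub_pos.2 hCε))] with k hk
  linarith [mul_add C (a k * Φ ε) ε, hI k ε hε]

theorem pned_bounded_implies_lpned_general
    {Ω : Type*} [m0 : MeasurableSpace Ω] (μ : Measure Ω) [IsProbabilityMeasure μ]
    {r q : ℕ}
    (Z : ℤ → Ω → (Fin r → ℝ)) (hZ : ∀ n, Measurable (Z n))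
    (X₀ : Ω → (Fin q → ℝ)) (hX : Measurable X₀)
    (M : ℝ) (hM : 0 < M) (hbdd : ∀ᵐ ω ∂μ, ∑ i, |X₀ ω i| ≤ M)
    (Φ : ℝ → ℝ)
    (a : ℕ → ℝ)
    (f : (k : ℕ) → ((Fin (2 * k + 1) → (Fin r → ℝ)) → (Fin q → ℝ)))
    (hf : ∀ k, Measurable (f k))
    (hP : ∀ (k : ℕ) (ε : ℝ), 0 < ε →
      (μ {ω | ε < ∑ i, |X₀ ω i - f k (fun j => Z ((j : ℤ) - k) ω) i|}).toReal
        ≤ a k * Φ ε) :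
    ∀ p : ℝ, 1 ≤ p → ∃ C : ℝ, 0 < C ∧
      (∀ (k : ℕ) (ε : ℝ), 0 < ε →
        ∫ ω, ∑ i, |X₀ ω i - (μ[fun ω' => X₀ ω' i | sigmaWindow Z k]) ω| ^ p ∂μ
          ≤ C * (a k * Φ ε + ε))
      ∧ (Tendsto a atTop (nhds 0) →
          Tendsto (fun k =>
              ∫ ω, ∑ i, |X₀ ω i - (μ[fun ω' => X₀ ω' i | sigmaWindow Z k]) ω| ^ p ∂μ)
            atTop (nhds 0))
      ∧ (∀ s : ℕ → ℝ, (∀ k, 0 < s k) → Tendsto s atTop (nhds 0) →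
          (fun k => a k * Φ (s k)) =O[atTop] s →
          (fun k =>
              ∫ ω, ∑ i, |X₀ ω i - (μ[fun ω' => X₀ ω' i | sigmaWindow Z k]) ω| ^ p ∂μ)
            =O[atTop] s) := by
  intro p hp
  have hXM : ∀ᵐ ω ∂μ, ∀ i, |X₀ ω i| ≤ M := hbdd.mono fun ω hω i =>
    (Finset.single_le_sum (fun j _ => abs_nonneg (X₀ ω j)) (Finset.mem_univ i)).trans hω
  set L := 2 * (2 * M) ^ (p - 1)
  have hL : 0 < L := by positivity
  set I := fun k => ∫ ω, ∑ i, |X₀ ω i - (μ[fun ω' => X₀ ω' i | sigmaWindow Z k]) ω| ^ p ∂μ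
  have hI0 : ∀ k, 0 ≤ I k := fun k => integral_nonneg fun ω => by positivity
  have hI : ∀ k ε, 0 < ε → I k ≤ L * (2 * q * M + 1) * (a k * Φ ε + ε) := by
    intro k ε hε
    have hm : sigmaWindow Z k ≤ m0 := Measurable.comap_le (measurable_pi_lambda _ fun j => hZ _)
    have hg : Measurable[sigmaWindow Z k] fun ω => f k (fun j => Z ((j : ℤ) - k) ω) :=
      (hf k).comp (Measurable.of_comap_le le_rfl)
    have hB : 0 ≤ a k * Φ ε := ENNReal.toReal_nonneg.trans (hP k ε hε)
    calc I k ≤ L * (ε + 2 * q * M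
          * μ.real {ω | ε < ∑ i, |X₀ ω i - f k (fun j => Z ((j : ℤ) - k) ω) i|}) := by
          simpa using integral_sum_abs_sub_condExp_rpow_le_of_measurable hm hX hg hM.le hXM hp
            hε.le
      _ ≤ L * (ε + 2 * q * M * (a k * Φ ε)) := by
          gcongr
          exact hP k ε hε
      _ ≤ L * (2 * q * M + 1) * (a k * Φ ε + ε) := by
          nlinarith [mul_nonneg hL.le (mul_nonneg (by positivity : (0 : ℝ) ≤ 2 * q * M) hε.le)]
  refine ⟨L * (2 * q * M + 1), by positivity, hI, tendsto_zero_of_forall_le_mul_add hI0 hI,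
    fun s hs _ hO => ?_⟩
  refine (Asymptotics.isBigO_of_le _ fun k => ?_).trans
    ((hO.add (Asymptotics.isBigO_refl s _)).const_mul_left (L * (2 * q * M + 1)))
  rw [Real.norm_of_nonneg (hI0 k)]
  exact (hI k (s k) (hs k)).trans (le_abs_self _)

/-- A bounded, `P`-near epoch dependent random vector `X₀` is `L_p`-near
epoch dependent for every `p ≥ 1`: there is a constant `C > 0` with
`E|X₀ − E(X₀|𝔉_{−k}^k)|_p^p ≤ C (a_k Φ(ε) + ε)` for all `k` and `ε > 0`; in particular the
`L_p` approximation errors tend to `0` when `a_k → 0`, and are `O(s_k)` whenever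
`a_k Φ(s_k) = O(s_k)` for positive `s_k → 0`. -/
theorem pned_bounded_implies_lpned
    {Ω : Type*} [m0 : MeasurableSpace Ω] (μ : Measure Ω) [IsProbabilityMeasure μ]
    {r q : ℕ}
    (Z : ℤ → Ω → (Fin r → ℝ)) (hZ : ∀ n, Measurable (Z n))
    (X₀ : Ω → (Fin q → ℝ)) (hX : Measurable X₀)
    (M : ℝ) (hM : 0 < M) (hbdd : ∀ᵐ ω ∂μ, ∑ i, |X₀ ω i| ≤ M)
    (Φ : ℝ → ℝ) (hΦpos : ∀ x : ℝ, 0 < x → 0 < Φ x)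
    (hΦ : ∀ x y : ℝ, 0 < x → x ≤ y → Φ y ≤ Φ x)
    (a : ℕ → ℝ) (ha : ∀ k, 0 ≤ a k)
    (f : (k : ℕ) → ((Fin (2 * k + 1) → (Fin r → ℝ)) → (Fin q → ℝ)))
    (hf : ∀ k, Measurable (f k))
    (hP : ∀ (k : ℕ) (ε : ℝ), 0 < ε →
      (μ {ω | ε < ∑ i, |X₀ ω i - f k (fun j => Z ((j : ℤ) - k) ω) i|}).toReal
        ≤ a k * Φ ε) :
    ∀ p : ℝ, 1 ≤ p → ∃ C : ℝ, 0 < C ∧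
      (∀ (k : ℕ) (ε : ℝ), 0 < ε →
        ∫ ω, ∑ i, |X₀ ω i - (μ[fun ω' => X₀ ω' i | sigmaWindow Z k]) ω| ^ p ∂μ
          ≤ C * (a k * Φ ε + ε))
      ∧ (Tendsto a atTop (nhds 0) →
          Tendsto (fun k =>
              ∫ ω, ∑ i, |X₀ ω i - (μ[fun ω' => X₀ ω' i | sigmaWindow Z k]) ω| ^ p ∂μ)
            atTop (nhds 0))
      ∧ (∀ s : ℕ → ℝ, (∀ k, 0 < s k) → Tendsto s atTop (nhds 0) →
          (fun k => a k * Φ (s k)) =O[atTop] s →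
          (fun k =>
              ∫ ω, ∑ i, |X₀ ω i - (μ[fun ω' => X₀ ω' i | sigmaWindow Z k]) ω| ^ p ∂μ)
            =O[atTop] s) :=
  pned_bounded_implies_lpned_general (m0 := m0) μ Z hZ X₀ hX M hM hbdd Φ a f hf hP
end

section
/- Let (Z_n)_{n∈ℤ} be a stochastic process with values in ℝ^r, X₀ an ℝ^q-valued random variable on the same probability space, and f_k : ℝ^{r×(2k+1)} → ℝ^q measurable functions, k ∈ ℕ. The following are equivalent: (i) f_k(Z_{−k},…,Z_k) converges to X₀ in probability as k → ∞; (ii) there exist a sequence of nonnegative reals (a_k)_{k∈ℕ} with a_k → 0 and a non-increasing function Φ : (0,∞) → (0,∞) such that P(|X₀ − f_k(Z_{−k},…,Z_k)|₁ > ε) ≤ a_k Φ(ε) for all k ∈ ℕ and all ε > 0. -/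
open MeasureTheory Filter

/-- The `P`-near epoch dependence condition is equivalent to convergence in
probability of the approximating functionals `f_k(Z_{−k},…,Z_k)` to `X₀`: there exist
constants `a_k → 0` and a non-increasing `Φ : (0,∞) → (0,∞)` with
`P(|X₀ − f_k(Z_{−k},…,Z_k)|₁ > ε) ≤ a_k Φ(ε)` for all `k` and `ε > 0` if and only if
`P(|X₀ − f_k(Z_{−k},…,Z_k)|₁ > ε) → 0` for every `ε > 0`. -/
theorem pned_iff_tendsto_in_probability
    {Ω : Type*} [MeasurableSpace Ω] (μ : Measure Ω) [IsProbabilityMeasure μ]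
    {r q : ℕ}
    (Z : ℤ → Ω → (Fin r → ℝ)) (hZ : ∀ n, Measurable (Z n))
    (X₀ : Ω → (Fin q → ℝ)) (hX : Measurable X₀)
    (f : (k : ℕ) → ((Fin (2 * k + 1) → (Fin r → ℝ)) → (Fin q → ℝ)))
    (hf : ∀ k, Measurable (f k)) :
    (∀ ε : ℝ, 0 < ε →
        Tendsto (fun k =>
            (μ {ω | ε < ∑ i, |X₀ ω i - f k (fun j => Z ((j : ℤ) - k) ω) i|}).toReal)
          atTop (nhds 0))
    ↔ ∃ (a : ℕ → ℝ) (Φ : ℝ → ℝ),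
        (∀ k, 0 ≤ a k) ∧ Tendsto a atTop (nhds 0) ∧
        (∀ x : ℝ, 0 < x → 0 < Φ x) ∧ (∀ x y : ℝ, 0 < x → x ≤ y → Φ y ≤ Φ x) ∧
        ∀ (k : ℕ) (ε : ℝ), 0 < ε →
          (μ {ω | ε < ∑ i, |X₀ ω i - f k (fun j => Z ((j : ℤ) - k) ω) i|}).toReal
            ≤ a k * Φ ε := by
  set g : ℕ → ℝ → ℝ := fun k ε =>
    (μ {ω | ε < ∑ i, |X₀ ω i - f k (fun j => Z ((j : ℤ) - k) ω) i|}).toReal with hgdef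
  have hg0 : ∀ k ε, 0 ≤ g k ε := fun k ε => ENNReal.toReal_nonneg
  have hg1 : ∀ k ε, g k ε ≤ 1 := by
    intro k ε
    have h := measure_mono (μ := μ)
      (Set.subset_univ {ω | ε < ∑ i, |X₀ ω i - f k (fun j => Z ((j : ℤ) - k) ω) i|})
    have := ENNReal.toReal_mono (measure_ne_top μ _) h
    simpa [hgdef] using this
  have hganti : ∀ k (x y : ℝ), x ≤ y → g k y ≤ g k x := by
    intro k x y hxy
    have h : {ω | y < ∑ i, |X₀ ω i - f k (fun j => Z ((j : ℤ) - k) ω) i|}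
        ⊆ {ω | x < ∑ i, |X₀ ω i - f k (fun j => Z ((j : ℤ) - k) ω) i|} := by
      intro ω hω
      exact lt_of_le_of_lt hxy hω
    exact ENNReal.toReal_mono (measure_ne_top μ _) (measure_mono h)
  constructor
  · intro h
    set S : ℕ → Set ℝ := fun k => (fun ε => g k ε / (1 + 1/ε)) '' Set.Ioi (0:ℝ) with hSdef
    have hSne : ∀ k, (S k).Nonempty := fun k => ⟨g k 1 / (1 + 1/1), ⟨1, by norm_num⟩⟩
    have hΦ1 : ∀ ε : ℝ, 0 < ε → (1:ℝ) ≤ 1 + 1/ε := by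
      intro ε hε
      have : 0 < 1/ε := by positivity
      linarith
    have hSbdd : ∀ k, BddAbove (S k) := by
      intro k
      refine ⟨1, ?_⟩
      rintro x ⟨ε, hε, rfl⟩
      calc g k ε / (1 + 1/ε) ≤ g k ε / 1 :=
            div_le_div_of_nonneg_left (hg0 k ε) one_pos (hΦ1 ε hε)
        _ = g k ε := div_one _
        _ ≤ 1 := hg1 k ε
    refine ⟨fun k => sSup (S k), fun ε => 1 + 1/ε, ?_, ?_, ?_, ?_, ?_⟩
    · intro k
      refine Real.sSup_nonneg ?_
      rintro x ⟨ε, hε, rfl⟩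
      have : (0:ℝ) < 1 + 1/ε := lt_of_lt_of_le one_pos (hΦ1 ε hε)
      exact div_nonneg (hg0 k ε) this.le
    · rw [Metric.tendsto_atTop]
      intro δ hδ
      have hδ2 : (0:ℝ) < δ/2 := by linarith
      have := (h (δ/2) hδ2)
      rw [Metric.tendsto_atTop] at this
      obtain ⟨N, hN⟩ := this (δ/2) hδ2
      refine ⟨N, fun k hk => ?_⟩
      have hgk : g k (δ/2) ≤ δ/2 := by
        have := hN k hk
        rw [Real.dist_eq, sub_zero, abs_of_nonneg (hg0 k _)] at this
        linarith
      have hsup : sSup (S k) ≤ δ/2 := by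
        refine Real.sSup_le ?_ hδ2.le
        rintro x ⟨ε, hε, rfl⟩
        rw [Set.mem_Ioi] at hε
        rcases le_or_gt ε (δ/2) with hle | hlt
        · have h1 : g k ε / (1 + 1/ε) ≤ 1 / (1 + 1/ε) := by
            have : (0:ℝ) < 1 + 1/ε := lt_of_lt_of_le one_pos (hΦ1 ε hε)
            exact div_le_div_of_nonneg_right (hg1 k ε) this.le |>.trans_eq rfl
          have h2 : 1 / (1 + 1/ε) ≤ ε := by
            rw [div_le_iff₀ (lt_of_lt_of_le one_pos (hΦ1 ε hε))]
            have h3 : ε * (1/ε) = 1 := by field_simp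
            nlinarith
          linarith
        · have h1 : g k ε / (1 + 1/ε) ≤ g k ε := by
            calc g k ε / (1 + 1/ε) ≤ g k ε / 1 :=
                  div_le_div_of_nonneg_left (hg0 k ε) one_pos (hΦ1 ε hε)
              _ = g k ε := div_one _
          have h2 : g k ε ≤ g k (δ/2) := hganti k (δ/2) ε hlt.le
          linarith
      have hnn : 0 ≤ sSup (S k) := by
        refine Real.sSup_nonneg ?_
        rintro x ⟨ε, hε, rfl⟩
        have : (0:ℝ) < 1 + 1/ε := lt_of_lt_of_le one_pos (hΦ1 ε hε)
        exact div_nonneg (hg0 k ε) this.le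
      rw [Real.dist_eq, sub_zero, abs_of_nonneg hnn]
      linarith
    · intro x hx
      have : 0 < 1/x := by positivity
      linarith
    · intro x y hx hxy
      have hy : 0 < y := lt_of_lt_of_le hx hxy
      have : 1/y ≤ 1/x := one_div_le_one_div_of_le hx hxy
      linarith
    · intro k ε hε
      have hΦpos : (0:ℝ) < 1 + 1/ε := lt_of_lt_of_le one_pos (hΦ1 ε hε)
      have hmem : g k ε / (1 + 1/ε) ∈ S k := ⟨ε, hε, rfl⟩
      have := le_csSup (hSbdd k) hmem
      calc g k ε = (g k ε / (1 + 1/ε)) * (1 + 1/ε) := by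
            field_simp
        _ ≤ sSup (S k) * (1 + 1/ε) := by
            exact mul_le_mul_of_nonneg_right this hΦpos.le
  · rintro ⟨a, Φ, ha0, hatend, hΦpos, hΦanti, hb⟩ ε hε
    have hlim : Tendsto (fun k => a k * Φ ε) atTop (nhds 0) := by
      simpa using hatend.mul_const (Φ ε)
    exact squeeze_zero (fun k => hg0 k ε) (fun k => hb k ε hε) hlim
end

section
/- Let (Z_j)_{j∈ℕ} be independent, identically distributed real-valued random variables, let a ∈ (−1,1) with a ≠ 0, and suppose there are constants C > 0 and α > 0 such that P(|Z_0| > t) ≤ C t^{−α} for all t > 0. Then there exists a constant K > 0 such that for every k ∈ ℕ and every ε > 0: P( Σ_{j=k+1}^{∞} |a|^j |Z_j| > ε ) ≤ K |a|^{αk} ε^{−α}. (Here the series of nonnegative terms is understood as a sum in [0,∞].) In particular, the tail of the linear (autoregressive) process Σ_{j≥0} a^j Z_{−j} beyond lag k is bounded in probability by a_k Φ(ε) with a_k = |a|^{αk} and Φ(ε) = K ε^{−α}. -/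
/-!
If every term of `∑ⱼ bⱼ |Yⱼ|` satisfies `bⱼ |Yⱼ| ≤ ε (1 - s) sʲ` then the sum is at most `ε`, so the
event `∑ⱼ bⱼ |Yⱼ| > ε` is covered by the events `|Yⱼ| > ε (1 - s) sʲ / bⱼ`, and the union bound
with the polynomial tail gives `C (ε (1 - s))^{-α} ∑ⱼ (bⱼ / sʲ)^α`. For the AR(1) tail
`bⱼ = |a|^{k+1+j}` and `s = √|a|` the summands are `|a|^{α(k+1)} (√|a|^α)ʲ`, a geometric series.
-/

open MeasureTheory
open scoped ENNReal

theorem ENNReal.exists_lt_of_tsum_lt {ι : Type*} {f g : ι → ℝ≥0∞}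
    (h : ∑' i, g i < ∑' i, f i) : ∃ i, g i < f i := by
  by_contra! H
  exact (ENNReal.tsum_le_tsum H).not_gt h

theorem ENNReal.tsum_ofReal_geometric {c q : ℝ} (hc : 0 ≤ c) (hq₀ : 0 ≤ q) (hq₁ : q < 1) :
    ∑' j : ℕ, ENNReal.ofReal (c * q ^ j) = ENNReal.ofReal (c / (1 - q)) := by
  rw [← ENNReal.ofReal_tsum_of_nonneg (fun j => by positivity)
    ((summable_geometric_of_lt_one hq₀ hq₁).mul_left c), tsum_mul_left,
    tsum_geometric_of_lt_one hq₀ hq₁, div_eq_mul_inv]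

section

variable {Ω : Type*} [MeasurableSpace Ω] (μ : Measure Ω)

theorem measure_tsum_gt_le_tsum_measure {ι : Type*} [Countable ι] (g : ι → ℝ≥0∞)
    (f : ι → Ω → ℝ≥0∞) :
    μ {ω | ∑' i, g i < ∑' i, f i ω} ≤ ∑' i, μ {ω | g i < f i ω} :=
  calc μ {ω | ∑' i, g i < ∑' i, f i ω}
      ≤ μ (⋃ i, {ω | g i < f i ω}) :=
        measure_mono fun _ hω => Set.mem_iUnion.mpr (ENNReal.exists_lt_of_tsum_lt hω)
    _ ≤ ∑' i, μ {ω | g i < f i ω} := measure_iUnion_le _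

theorem measure_weighted_tsum_abs_gt_le {Y : ℕ → Ω → ℝ} {b : ℕ → ℝ} {C α ε s : ℝ}
    (hb : ∀ j, 0 < b j) (hε : 0 < ε) (hs₀ : 0 < s) (hs₁ : s < 1)
    (htail : ∀ j t, 0 < t → μ {ω | t < |Y j ω|} ≤ ENNReal.ofReal (C * t ^ (-α))) :
    μ {ω | ENNReal.ofReal ε < ∑' j, ENNReal.ofReal (b j * |Y j ω|)}
      ≤ ∑' j, ENNReal.ofReal (C * (ε * (1 - s)) ^ (-α) * (b j / s ^ j) ^ α) := by
  have h1s : 0 < 1 - s := by linarith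
  have hε_eq : ENNReal.ofReal ε = ∑' j : ℕ, ENNReal.ofReal (ε * (1 - s) * s ^ j) := by
    rw [ENNReal.tsum_ofReal_geometric (by positivity) hs₀.le hs₁, mul_div_cancel_right₀ _ h1s.ne']
  rw [hε_eq]
  refine (measure_tsum_gt_le_tsum_measure μ _ _).trans (ENNReal.tsum_le_tsum fun j => ?_)
  have hbj := hb j
  have hevent : {ω | ENNReal.ofReal (ε * (1 - s) * s ^ j) < ENNReal.ofReal (b j * |Y j ω|)}
      = {ω | ε * (1 - s) * s ^ j / b j < |Y j ω|} := by
    ext ω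
    simp only [Set.mem_ofPred_eq, div_lt_iff₀' hbj,
      ENNReal.ofReal_lt_ofReal_iff_of_nonneg (by positivity : 0 ≤ ε * (1 - s) * s ^ j)]
  have hthreshold : (ε * (1 - s) * s ^ j / b j) ^ (-α)
      = (ε * (1 - s)) ^ (-α) * (b j / s ^ j) ^ α := by
    rw [mul_div_assoc, Real.mul_rpow (by positivity) (by positivity),
      Real.rpow_neg (by positivity : 0 ≤ s ^ j / b j), ← Real.inv_rpow (by positivity), inv_div]
  rw [hevent, mul_assoc C, ← hthreshold]
  exact htail j _ (by positivity)

end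

theorem rpow_pow_add_div_sqrt_pow {r : ℝ} (hr : 0 < r) (α : ℝ) (k j : ℕ) :
    (r ^ (k + 1 + j) / √r ^ j) ^ α = r ^ α * r ^ (α * k) * (√r ^ α) ^ j := by
  have hsq : r ^ (k + 1 + j) / √r ^ j = r ^ (k + 1) * √r ^ j := by
    have hrj : r ^ j = √r ^ j * √r ^ j := by rw [← mul_pow, Real.mul_self_sqrt hr.le]
    have : 0 < √r := Real.sqrt_pos.mpr hr
    rw [pow_add, hrj]
    field_simp
  rw [hsq, Real.mul_rpow (by positivity) (by positivity), ← Real.rpow_natCast r,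
    ← Real.rpow_mul hr.le, ← Real.rpow_natCast (√r), ← Real.rpow_mul (Real.sqrt_nonneg r),
    ← Real.rpow_natCast, ← Real.rpow_mul (Real.sqrt_nonneg r), ← Real.rpow_add hr]
  push_cast
  ring_nf

theorem ar1_pned_tail_bound_general
    {Ω : Type*} [MeasurableSpace Ω] (μ : Measure Ω) [IsProbabilityMeasure μ]
    (Z : ℕ → Ω → ℝ) (hmeas : ∀ j, Measurable (Z j))
    (hident : ∀ j, μ.map (Z j) = μ.map (Z 0))
    (a : ℝ) (ha₁ : -1 < a) (ha₂ : a < 1) (ha₀ : a ≠ 0)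
    (C α : ℝ) (hC : 0 < C) (hα : 0 < α)
    (htail : ∀ t : ℝ, 0 < t → (μ {ω | t < |Z 0 ω|}).toReal ≤ C * t ^ (-α)) :
    ∃ K : ℝ, 0 < K ∧ ∀ (k : ℕ) (ε : ℝ), 0 < ε →
      (μ {ω | ENNReal.ofReal ε <
          ∑' j : ℕ, ENNReal.ofReal (|a| ^ (k + 1 + j) * |Z (k + 1 + j) ω|)}).toReal
        ≤ K * |a| ^ (α * k) * ε ^ (-α) := by
  set r := |a|
  have hr₀ : 0 < r := abs_pos.mpr ha₀
  have hs₀ : 0 < √r := Real.sqrt_pos.mpr hr₀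
  have hs₁ : √r < 1 := (Real.sqrt_lt' one_pos).mpr (by rw [one_pow]; exact abs_lt.mpr ⟨ha₁, ha₂⟩)
  have hq₀ : 0 < √r ^ α := Real.rpow_pos_of_pos hs₀ α
  have hq₁ : √r ^ α < 1 := Real.rpow_lt_one hs₀.le hs₁ hα
  refine ⟨C * (1 - √r) ^ (-α) * r ^ α / (1 - √r ^ α), by bound, fun k ε hε => ?_⟩
  have htail' : ∀ j t, 0 < t →
      μ {ω | t < |Z (k + 1 + j) ω|} ≤ ENNReal.ofReal (C * t ^ (-α)) := fun j t ht => by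
    change μ (Z (k + 1 + j) ⁻¹' {x | t < |x|}) ≤ _
    rw [(⟨(hmeas _).aemeasurable, (hmeas 0).aemeasurable, hident _⟩ :
        ProbabilityTheory.IdentDistrib (Z (k + 1 + j)) (Z 0) μ μ).measure_mem_eq
        (measurableSet_lt measurable_const measurable_abs : MeasurableSet {x : ℝ | t < |x|}),
      ENNReal.le_ofReal_iff_toReal_le (measure_ne_top _ _) (by positivity)]
    exact htail t ht
  have hbound := measure_weighted_tsum_abs_gt_le μ (b := fun j => r ^ (k + 1 + j))
    (fun j => by positivity) hε hs₀ hs₁ htail'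
  simp only [rpow_pow_add_div_sqrt_pow hr₀, ← mul_assoc] at hbound
  rw [ENNReal.tsum_ofReal_geometric (by positivity) hq₀.le hq₁] at hbound
  refine ENNReal.toReal_le_of_le_ofReal (by positivity) (hbound.trans_eq (congrArg _ ?_))
  rw [Real.mul_rpow hε.le (by linarith)]
  ring

/-- For i.i.d. innovations `Z_j` with polynomial tails
`P(|Z₀| > t) ≤ C t^{−α}` and `a ∈ (−1,1) \ {0}`, the tail of the linear (AR(1)) process
beyond lag `k` satisfies the P-NED bound
`P(Σ_{j=k+1}^∞ |a|^j |Z_j| > ε) ≤ K |a|^{αk} ε^{−α}` for some constant `K > 0`. -/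
theorem ar1_pned_tail_bound
    {Ω : Type*} [MeasurableSpace Ω] (μ : Measure Ω) [IsProbabilityMeasure μ]
    (Z : ℕ → Ω → ℝ) (hmeas : ∀ j, Measurable (Z j))
    (hindep : ProbabilityTheory.iIndepFun Z μ)
    (hident : ∀ j, μ.map (Z j) = μ.map (Z 0))
    (a : ℝ) (ha₁ : -1 < a) (ha₂ : a < 1) (ha₀ : a ≠ 0)
    (C α : ℝ) (hC : 0 < C) (hα : 0 < α)
    (htail : ∀ t : ℝ, 0 < t → (μ {ω | t < |Z 0 ω|}).toReal ≤ C * t ^ (-α)) :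
    ∃ K : ℝ, 0 < K ∧ ∀ (k : ℕ) (ε : ℝ), 0 < ε →
      (μ {ω | ENNReal.ofReal ε <
          ∑' j : ℕ, ENNReal.ofReal (|a| ^ (k + 1 + j) * |Z (k + 1 + j) ω|)}).toReal
        ≤ K * |a| ^ (α * k) * ε ^ (-α) :=
  ar1_pned_tail_bound_general μ Z hmeas hident a ha₁ ha₂ ha₀ C α hC hα htail
end

section
/- Let F : ℝ² → [0,1] be a bivariate distribution function that is Lipschitz continuous, let (X,Y) and (X′,Y′) be independent random vectors each with distribution function F, and let h be the Kendall kernel. Then Kendall's tau τ = E[h((X,Y),(X′,Y′))] satisfies τ = 4 E[F(X,Y)] − 1. -/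
/-!
Lipschitz continuity of `F` rules out atoms of both marginals, so ties `X = X'` or `Y = Y'` have
probability zero. Off the ties, `h((X,Y),(X',Y')) = 2 [(X',Y') ≤ (X,Y)] + 2 [(X,Y) ≤ (X',Y')] - 1`
for the componentwise order, and by exchangeability both indicators have expectation
`P((X',Y') ≤ (X,Y)) = E[F(X,Y)]` (Fubini).
-/

open MeasureTheory

/-- The Kendall kernel: `h((x₁,y₁),(x₂,y₂)) = sign((x₂−x₁)(y₂−y₁))`. -/
noncomputable def kendallKernel (z w : ℝ × ℝ) : ℝ :=
  if 0 < (w.1 - z.1) * (w.2 - z.2) then 1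
  else if (w.1 - z.1) * (w.2 - z.2) < 0 then -1
  else 0

open Filter Set Topology

theorem continuous_of_abs_sub_le_mul {f : ℝ → ℝ} {C : ℝ}
    (h : ∀ x x', |f x - f x'| ≤ C * |x - x'|) : Continuous f :=
  (LipschitzWith.of_dist_le' h).continuous

section NoAtoms

variable {α : Type*} [MeasurableSpace α] {ν : Measure α} [IsFiniteMeasure ν]
  {f g : α → ℝ}

theorem measureReal_setOf_eq_and_le_le_sub (hf : Measurable f) (hg : Measurable g) (x y : ℝ)
    {ε : ℝ} (hε : 0 < ε) :
    ν.real {q | f q = x ∧ g q ≤ y} ≤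
      ν.real {q | f q ≤ x ∧ g q ≤ y} - ν.real {q | f q ≤ x - ε ∧ g q ≤ y} := by
  have hsub : {q | f q ≤ x - ε ∧ g q ≤ y} ⊆ {q | f q ≤ x ∧ g q ≤ y} :=
    fun q hq => ⟨hq.1.trans (by linarith), hq.2⟩
  rw [← measureReal_sdiff hsub
    ((measurableSet_le hf measurable_const).inter (measurableSet_le hg measurable_const))]
  refine measureReal_mono fun q ⟨hfq, hgq⟩ => ⟨⟨hfq.le, hgq⟩, fun h => ?_⟩
  linarith [h.1]

theorem measure_setOf_eq_and_le_eq_zero (hf : Measurable f) (hg : Measurable g) {y : ℝ}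
    (hcont : Continuous fun x => ν.real {q | f q ≤ x ∧ g q ≤ y}) (x : ℝ) :
    ν {q | f q = x ∧ g q ≤ y} = 0 := by
  have hlim : Tendsto (fun n : ℕ => ν.real {q | f q ≤ x ∧ g q ≤ y} -
      ν.real {q | f q ≤ x - 1 / (n + 1) ∧ g q ≤ y}) atTop (𝓝 0) := by
    have hseq : Tendsto (fun n : ℕ => x - 1 / (n + 1)) atTop (𝓝 x) := by
      simpa using (tendsto_const_nhds (x := x)).sub tendsto_one_div_add_atTop_nhds_zero_nat
    simpa using (tendsto_const_nhds (x := ν.real {q | f q ≤ x ∧ g q ≤ y})).sub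
      ((hcont.tendsto x).comp hseq)
  have hle : ν.real {q | f q = x ∧ g q ≤ y} ≤ 0 :=
    ge_of_tendsto' hlim fun _ => measureReal_setOf_eq_and_le_le_sub hf hg x y Nat.one_div_pos_of_nat
  exact (measureReal_eq_zero_iff).1 (hle.antisymm measureReal_nonneg)

theorem measure_setOf_eq_eq_zero_of_continuous (hf : Measurable f) (hg : Measurable g)
    (hcont : ∀ y, Continuous fun x => ν.real {q | f q ≤ x ∧ g q ≤ y}) (x : ℝ) :
    ν {q | f q = x} = 0 := by
  refine measure_mono_null (fun q (hq : f q = x) => ?_)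
    (measure_iUnion_null fun n : ℕ => measure_setOf_eq_and_le_eq_zero hf hg (hcont n) x)
  obtain ⟨n, hn⟩ := exists_nat_ge (g q)
  exact mem_iUnion.2 ⟨n, hq, hn⟩

end NoAtoms

theorem ae_prod_ne_of_measure_setOf_eq_eq_zero {α β : Type*} [MeasurableSpace α]
    [MeasurableSpace β] {μ : Measure α} {ν : Measure β} {f : α → ℝ} {g : β → ℝ} (hf : Measurable f)
    (hg : Measurable g) (h : ∀ x, ν {q | g q = x} = 0) :
    ∀ᵐ z ∂μ.prod ν, f z.1 ≠ g z.2 := by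
  rw [ae_iff]
  simp only [ne_eq, not_not]
  exact Measure.measure_prod_null_of_ae_null
    (measurableSet_eq_fun (hf.comp measurable_fst) (hg.comp measurable_snd))
    (ae_of_all _ fun p => by simpa [eq_comm] using h (f p))

theorem measureReal_prod_setOf_snd_le_fst {α : Type*} [MeasurableSpace α] [Preorder α]
    {μ ν : Measure α} [IsFiniteMeasure ν] (hle : MeasurableSet {z : α × α | z.2 ≤ z.1}) :
    (μ.prod ν).real {z | z.2 ≤ z.1} = ∫ p, ν.real (Iic p) ∂μ := by
  rw [measureReal_def, Measure.prod_apply hle, ← integral_toReal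
    (measurable_measure_prodMk_left hle).aemeasurable (ae_of_all _ fun _ => measure_lt_top _ _)]
  rfl

theorem kendallKernel_eq_of_ne {z w : ℝ × ℝ} (h₁ : z.1 ≠ w.1) (h₂ : z.2 ≠ w.2) :
    kendallKernel z w = 2 * ({p : (ℝ × ℝ) × (ℝ × ℝ) | p.2 ≤ p.1}.indicator 1 (z, w) +
      {p : (ℝ × ℝ) × (ℝ × ℝ) | p.2 ≤ p.1}.indicator 1 (w, z)) - 1 := by
  obtain ⟨z₁, z₂⟩ := z
  obtain ⟨w₁, w₂⟩ := w
  simp only [kendallKernel, indicator_apply, mem_ofPred_eq, Prod.mk_le_mk, Pi.one_apply]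
  rcases lt_or_gt_of_ne h₁ with h₁ | h₁ <;> rcases lt_or_gt_of_ne h₂ with h₂ | h₂ <;>
    norm_num [h₁, h₂, h₁.le, h₂.le, h₁.not_ge, h₂.not_ge, mul_pos_iff, mul_neg_iff]

theorem integral_kendallKernel_prod_eq {ν : Measure (ℝ × ℝ)} [IsProbabilityMeasure ν]
    (hfst : ∀ x, ν {q | q.1 = x} = 0) (hsnd : ∀ y, ν {q | q.2 = y} = 0) :
    ∫ z, kendallKernel z.1 z.2 ∂(ν.prod ν) = 4 * (ν.prod ν).real {z | z.2 ≤ z.1} - 1 := by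
  have hties : ∀ᵐ z ∂(ν.prod ν), z.1.1 ≠ z.2.1 ∧ z.1.2 ≠ z.2.2 :=
    (ae_prod_ne_of_measure_setOf_eq_eq_zero measurable_fst measurable_fst hfst).and
      (ae_prod_ne_of_measure_setOf_eq_eq_zero measurable_snd measurable_snd hsnd)
  have hD : MeasurableSet {z : (ℝ × ℝ) × (ℝ × ℝ) | z.2 ≤ z.1} :=
    measurableSet_le measurable_snd measurable_fst
  have hint : Integrable ({z : (ℝ × ℝ) × (ℝ × ℝ) | z.2 ≤ z.1}.indicator 1) (ν.prod ν) :=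
    (integrable_const (1 : ℝ)).indicator hD
  calc ∫ z, kendallKernel z.1 z.2 ∂(ν.prod ν)
      = ∫ z, 2 * ({z : (ℝ × ℝ) × (ℝ × ℝ) | z.2 ≤ z.1}.indicator 1 z +
          {z : (ℝ × ℝ) × (ℝ × ℝ) | z.2 ≤ z.1}.indicator 1 z.swap) - 1 ∂(ν.prod ν) :=
        integral_congr_ae (hties.mono fun z hz => kendallKernel_eq_of_ne hz.1 hz.2)
    _ = 4 * (ν.prod ν).real {z | z.2 ≤ z.1} - 1 := by
        rw [integral_sub ?_ (integrable_const 1), integral_const_mul, integral_add hint ?_,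
          integral_prod_swap, integral_indicator_one hD]
        · simp only [integral_const, probReal_univ, smul_eq_mul, mul_one]
          ring
        · exact hint.swap
        · exact (hint.add hint.swap).const_mul 2

/-- If the bivariate distribution function `F` of the law `ν` is Lipschitz
continuous, then Kendall's tau `τ = E[h((X,Y),(X′,Y′))]` (with `(X,Y), (X′,Y′)` i.i.d. `ν`)
satisfies `τ = 4 E[F(X,Y)] − 1`. -/
theorem kendall_tau_eq_four_EF_sub_one
    (ν : Measure (ℝ × ℝ)) [IsProbabilityMeasure ν]
    (F : ℝ → ℝ → ℝ)
    (hF : ∀ x y : ℝ, F x y = (ν {p : ℝ × ℝ | p.1 ≤ x ∧ p.2 ≤ y}).toReal)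
    (C : ℝ) (hLip : ∀ x y x' y' : ℝ, |F x y - F x' y'| ≤ C * (|x - x'| + |y - y'|)) :
    ∫ z : (ℝ × ℝ) × (ℝ × ℝ), kendallKernel z.1 z.2 ∂(ν.prod ν)
      = 4 * (∫ p : ℝ × ℝ, F p.1 p.2 ∂ν) - 1 := by
  have hcdf : ∀ x y, ν.real {q : ℝ × ℝ | q.1 ≤ x ∧ q.2 ≤ y} = F x y := fun x y => (hF x y).symm
  have hfst : ∀ x, ν {q : ℝ × ℝ | q.1 = x} = 0 :=
    measure_setOf_eq_eq_zero_of_continuous measurable_fst measurable_snd fun y => by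
      simpa only [hcdf] using continuous_of_abs_sub_le_mul fun x x' => by
        simpa using hLip x y x' y
  have hsnd : ∀ y, ν {q : ℝ × ℝ | q.2 = y} = 0 :=
    measure_setOf_eq_eq_zero_of_continuous measurable_snd measurable_fst fun x => by
      have hswap : ∀ y, {q : ℝ × ℝ | q.2 ≤ y ∧ q.1 ≤ x} = {q | q.1 ≤ x ∧ q.2 ≤ y} :=
        fun y => ext fun q => and_comm
      simpa only [hswap, hcdf] using continuous_of_abs_sub_le_mul fun y y' => by
        simpa using hLip x y x y'
  rw [integral_kendallKernel_prod_eq hfst hsnd,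
    measureReal_prod_setOf_snd_le_fst (measurableSet_le measurable_snd measurable_fst)]
  simp only [hF]
  rfl
end

section
/- Let F : ℝ² → [0,1] be a bivariate distribution function that is Lipschitz continuous, with marginal distribution functions F_X and F_Y, let (X,Y) be a random vector with distribution function F, and let h be the Kendall kernel. Then for every (x,y) ∈ ℝ²: E[h((x,y),(X,Y))] = 4F(x,y) − 2F_X(x) − 2F_Y(y) + 1. In particular, the linear part h₁(x,y) = E[h((x,y),(X,Y))] − τ of the Hoeffding decomposition of Kendall's tau equals 4F(x,y) − 2F_X(x) − 2F_Y(y) + 1 − τ, where τ = 4E[F(X,Y)] − 1 is Kendall's tau of F. -/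
/-!
Off the two lines `p.1 = x` and `p.2 = y` the kernel factorises as
`h((x,y),p) = (1 - 2·1{p.1 ≤ x}) (1 - 2·1{p.2 ≤ y})`; expanding the product and integrating gives
`1 - 2F_X(x) - 2F_Y(y) + 4F(x,y)`. The two lines are null because a Lipschitz distribution function
gives them no mass: a vertical line cut at height `n` lies in a strip of width `δ` whose mass is
at most `Cδ`.
-/

open MeasureTheory Filter Topology

lemma nonpos_of_forall_pos_le_mul {t C : ℝ} (h : ∀ δ > 0, t ≤ C * δ) : t ≤ 0 := by
  have hlim : Tendsto (fun δ ↦ C * δ) (𝓝[>] 0) (𝓝 0) := by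
    simpa using ((continuous_const_mul C).tendsto 0).mono_left nhdsWithin_le_nhds
  exact ge_of_tendsto hlim (eventually_nhdsWithin_of_forall h)

section NullLines

variable {α : Type*} [MeasurableSpace α] (μ : Measure α) [IsFiniteMeasure μ] {f g : α → ℝ} {C : ℝ}

lemma measure_preimage_singleton_eq_zero_of_lipschitz (hf : Measurable f)
    (hC : ∀ a b : ℝ, |μ.real {p | f p ≤ a} - μ.real {p | f p ≤ b}| ≤ C * |a - b|) (a : ℝ) :
    μ {p | f p = a} = 0 := by
  refine (measureReal_eq_zero_iff).1 (le_antisymm ?_ measureReal_nonneg)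
  refine nonpos_of_forall_pos_le_mul (C := C) fun δ hδ ↦ ?_
  have hsub : {p | f p = a} ⊆ {p | f p ≤ a} \ {p | f p ≤ a - δ} := fun p hp ↦ by
    simp only [Set.mem_ofPred_eq] at hp
    simp [hp, hδ]
  calc μ.real {p | f p = a} ≤ μ.real ({p | f p ≤ a} \ {p | f p ≤ a - δ}) := measureReal_mono hsub
    _ = μ.real {p | f p ≤ a} - μ.real {p | f p ≤ a - δ} :=
        measureReal_sdiff (fun p hp ↦ by simp only [Set.mem_ofPred_eq] at hp ⊢; linarith)
          (measurableSet_le hf measurable_const)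
    _ ≤ C * |a - (a - δ)| := (le_abs_self _).trans (hC _ _)
    _ = C * δ := by rw [sub_sub_cancel, abs_of_pos hδ]

lemma measure_preimage_singleton_eq_zero_of_lipschitz_slices (hf : Measurable f)
    (hC : ∀ (n : ℕ) (a b : ℝ),
      |μ.real {p | f p ≤ a ∧ g p ≤ n} - μ.real {p | f p ≤ b ∧ g p ≤ n}| ≤ C * |a - b|)
    (a : ℝ) : μ {p | f p = a} = 0 := by
  have hslice (n : ℕ) : μ ({p | f p = a} ∩ {p | g p ≤ n}) = 0 := by
    rw [← Measure.restrict_apply (measurableSet_eq_fun hf measurable_const)]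
    refine measure_preimage_singleton_eq_zero_of_lipschitz _ hf (C := C) (fun b c ↦ ?_) a
    rw [measureReal_restrict_apply (measurableSet_le hf measurable_const),
      measureReal_restrict_apply (measurableSet_le hf measurable_const)]
    exact hC n b c
  refine measure_mono_null (fun p hp ↦ ?_) (measure_iUnion_null hslice)
  obtain ⟨n, hn⟩ := exists_nat_ge (g p)
  exact Set.mem_iUnion.2 ⟨n, hp, hn⟩

end NullLines

section LipschitzDistributionFunction

variable (ν : Measure (ℝ × ℝ)) [IsFiniteMeasure ν] {F : ℝ → ℝ → ℝ} {C : ℝ}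

lemma measure_fst_eq_zero_of_lipschitz_cdf
    (hF : ∀ x y : ℝ, F x y = (ν {p : ℝ × ℝ | p.1 ≤ x ∧ p.2 ≤ y}).toReal)
    (hLip : ∀ x y x' y' : ℝ, |F x y - F x' y'| ≤ C * (|x - x'| + |y - y'|)) (x : ℝ) :
    ν {p | p.1 = x} = 0 :=
  measure_preimage_singleton_eq_zero_of_lipschitz_slices ν measurable_fst
    (fun n a b ↦ by
      simpa only [← measureReal_def, sub_self, abs_zero, add_zero, hF] using hLip a n b n) x

lemma measure_snd_eq_zero_of_lipschitz_cdf
    (hF : ∀ x y : ℝ, F x y = (ν {p : ℝ × ℝ | p.1 ≤ x ∧ p.2 ≤ y}).toReal)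
    (hLip : ∀ x y x' y' : ℝ, |F x y - F x' y'| ≤ C * (|x - x'| + |y - y'|)) (y : ℝ) :
    ν {p | p.2 = y} = 0 :=
  measure_preimage_singleton_eq_zero_of_lipschitz_slices ν measurable_snd
    (fun n a b ↦ by
      simpa only [and_comm, ← measureReal_def, sub_self, abs_zero, zero_add, hF] using
        hLip n a n b) y

end LipschitzDistributionFunction

lemma kendallKernel_eq_of_ne_s6 {x y : ℝ} {p : ℝ × ℝ} (hx : p.1 ≠ x) (hy : p.2 ≠ y) :
    kendallKernel (x, y) p =
      (1 - 2 * {q : ℝ × ℝ | q.1 ≤ x}.indicator 1 p) *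
        (1 - 2 * {q : ℝ × ℝ | q.2 ≤ y}.indicator 1 p) := by
  rcases hx.lt_or_gt with hx | hx <;> rcases hy.lt_or_gt with hy | hy
  · have : 0 < (p.1 - x) * (p.2 - y) := mul_pos_of_neg_of_neg (by linarith) (by linarith)
    norm_num [kendallKernel, this, hx.le, hy.le]
  · have : (p.1 - x) * (p.2 - y) < 0 := mul_neg_of_neg_of_pos (by linarith) (by linarith)
    norm_num [kendallKernel, this, this.not_gt, hx.le, hy.not_ge]
  · have : (p.1 - x) * (p.2 - y) < 0 := mul_neg_of_pos_of_neg (by linarith) (by linarith)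
    norm_num [kendallKernel, this, this.not_gt, hx.not_ge, hy.le]
  · have : 0 < (p.1 - x) * (p.2 - y) := mul_pos (by linarith) (by linarith)
    norm_num [kendallKernel, this, hx.not_ge, hy.not_ge]

lemma integral_kendallKernel (ν : Measure (ℝ × ℝ)) [IsProbabilityMeasure ν] {x y : ℝ}
    (hx : ν {p | p.1 = x} = 0) (hy : ν {p | p.2 = y} = 0) :
    ∫ p, kendallKernel (x, y) p ∂ν =
      4 * ν.real {p | p.1 ≤ x ∧ p.2 ≤ y} - 2 * ν.real {p | p.1 ≤ x} -
        2 * ν.real {p | p.2 ≤ y} + 1 := by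
  set SX : Set (ℝ × ℝ) := {p | p.1 ≤ x}
  set SY : Set (ℝ × ℝ) := {p | p.2 ≤ y}
  have hSX : MeasurableSet SX := measurableSet_le measurable_fst measurable_const
  have hSY : MeasurableSet SY := measurableSet_le measurable_snd measurable_const
  have h_ae : (fun p ↦ kendallKernel (x, y) p) =ᵐ[ν]
      fun p ↦ 1 - 2 * SX.indicator 1 p - 2 * SY.indicator 1 p + 4 * (SX ∩ SY).indicator 1 p := by
    have hx' : ∀ᵐ p ∂ν, p.1 ≠ x := ae_iff.2 (by simpa using hx)
    have hy' : ∀ᵐ p ∂ν, p.2 ≠ y := ae_iff.2 (by simpa using hy)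
    filter_upwards [hx', hy'] with p hpx hpy
    rw [kendallKernel_eq_of_ne_s6 hpx hpy, Set.inter_indicator_one, Pi.mul_apply]
    ring
  have hint (s : Set (ℝ × ℝ)) (hs : MeasurableSet s) : Integrable (s.indicator (1 : ℝ × ℝ → ℝ)) ν :=
    (integrable_const (1 : ℝ)).indicator hs
  have := hint SX hSX
  have := hint SY hSY
  have := hint _ (hSX.inter hSY)
  rw [integral_congr_ae h_ae, integral_add (by fun_prop) (by fun_prop),
    integral_sub (by fun_prop) (by fun_prop), integral_sub (by fun_prop) (by fun_prop),
    integral_const, integral_const_mul, integral_const_mul, integral_const_mul,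
    integral_indicator_one hSX, integral_indicator_one hSY,
    integral_indicator_one (hSX.inter hSY), probReal_univ, smul_eq_mul, mul_one]
  change _ = 4 * ν.real (SX ∩ SY) - _ - _ + _
  ring

/-- For a Lipschitz continuous bivariate distribution function `F` of the
law `ν`, with marginals `F_X, F_Y`, one has
`E[h((x,y),(X,Y))] = 4F(x,y) − 2F_X(x) − 2F_Y(y) + 1` for every `(x,y)`; in particular the
linear part `h₁(x,y) = E[h((x,y),(X,Y))] − τ` of the Hoeffding decomposition equals
`4F(x,y) − 2F_X(x) − 2F_Y(y) + 1 − τ`, where `τ = 4E[F(X,Y)] − 1`. -/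
theorem kendall_kernel_linear_part
    (ν : Measure (ℝ × ℝ)) [IsProbabilityMeasure ν]
    (F : ℝ → ℝ → ℝ) (FX FY : ℝ → ℝ)
    (hF : ∀ x y : ℝ, F x y = (ν {p : ℝ × ℝ | p.1 ≤ x ∧ p.2 ≤ y}).toReal)
    (hFX : ∀ x : ℝ, FX x = (ν {p : ℝ × ℝ | p.1 ≤ x}).toReal)
    (hFY : ∀ y : ℝ, FY y = (ν {p : ℝ × ℝ | p.2 ≤ y}).toReal)
    (C : ℝ) (hLip : ∀ x y x' y' : ℝ, |F x y - F x' y'| ≤ C * (|x - x'| + |y - y'|)) :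
    (∀ x y : ℝ,
      ∫ p : ℝ × ℝ, kendallKernel (x, y) p ∂ν = 4 * F x y - 2 * FX x - 2 * FY y + 1)
    ∧ (∀ x y : ℝ,
      (∫ p : ℝ × ℝ, kendallKernel (x, y) p ∂ν) - (4 * (∫ p : ℝ × ℝ, F p.1 p.2 ∂ν) - 1)
        = 4 * F x y - 2 * FX x - 2 * FY y + 1 - (4 * (∫ p : ℝ × ℝ, F p.1 p.2 ∂ν) - 1)) := by
  have h_integral (x y : ℝ) :
      ∫ p : ℝ × ℝ, kendallKernel (x, y) p ∂ν = 4 * F x y - 2 * FX x - 2 * FY y + 1 := by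
    rw [integral_kendallKernel ν (measure_fst_eq_zero_of_lipschitz_cdf ν hF hLip x)
      (measure_snd_eq_zero_of_lipschitz_cdf ν hF hLip y), hF, hFX, hFY]
    rfl
  exact ⟨h_integral, fun x y ↦ by rw [h_integral]⟩
end

section
/- Let 0 < λ* < 1 and let τ_F, τ_G, τ_{FG} be real numbers with τ_F ≠ τ_G satisfying (1−λ*)² / (2((1−λ*)² + λ*)) ≤ (τ_{FG} − τ_F)/(τ_G − τ_F) < 1. Define c : [0,1] → ℝ by c(λ) = [ (1−λ*²)τ_F − (1−λ*)²τ_G − 2λ*(1−λ*)τ_{FG} ] · λ for 0 ≤ λ < λ*, and c(λ) = 2λ*(τ_{FG} − τ_G)(1−λ) + λ*²(τ_F + τ_G − 2τ_{FG})(1/λ − λ) for λ* ≤ λ ≤ 1. Then the function λ ↦ |c(λ)| attains its maximum over [0,1] at λ = λ* and this maximizer is unique, i.e. |c(λ)| < |c(λ*)| for every λ ∈ [0,1] with λ ≠ λ*. -/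
/-!
Write `d = τ_G − τ_F` and `r = (τ_FG − τ_F)/d`. On `[0, λ*)` the function `c` is linear through
the origin, and on `[λ*, 1]` it is `d` times a profile which is negative at `λ*`, vanishes at `1`
and is strictly increasing in between: for `r < 1/2` its difference quotients exceed
`2λ*(1 − r) − (1 − 2r)(1 + λ*²)`, which is nonnegative exactly by the lower bound on `r`.
The two pieces agree at `λ*`, so `|c|` peaks there and nowhere else.
-/

namespace KendallCusum

/-- On `[λ*, 1]`, `c = (τ_G − τ_F) • rightProfile λ* r` with `r = (τ_FG − τ_F)/(τ_G − τ_F)`. -/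
noncomputable def rightProfile (s r l : ℝ) : ℝ :=
  -(2 * s * (1 - r) * (1 - l)) + s ^ 2 * (1 - 2 * r) * (1 / l - l)

noncomputable def rightProfileSlope (s r p : ℝ) : ℝ :=
  2 * s * (1 - r) - s ^ 2 * (1 - 2 * r) * (1 / p + 1)

variable {s r : ℝ}

theorem rightProfile_one : rightProfile s r 1 = 0 := by
  simp [rightProfile]

theorem rightProfile_self (hs : s ≠ 0) :
    rightProfile s r s = -(s * ((1 - s) * (1 - s + 2 * s * r))) := by
  unfold rightProfile
  field_simp
  ring

theorem rightProfile_sub {u t : ℝ} (hu : u ≠ 0) (ht : t ≠ 0) :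
    rightProfile s r t - rightProfile s r u = (t - u) * rightProfileSlope s r (u * t) := by
  unfold rightProfile rightProfileSlope
  field_simp
  ring

theorem rightProfileSlope_pos {p : ℝ} (hs : 0 < s) (hp : s ^ 2 < p) (hr : r < 1)
    (hlow : (1 - s) ^ 2 ≤ r * (2 * ((1 - s) ^ 2 + s))) : 0 < rightProfileSlope s r p := by
  have hp0 : 0 < p := (pow_pos hs 2).trans hp
  unfold rightProfileSlope
  rcases le_or_gt (1 - 2 * r) 0 with hneg | hpos
  · have : s ^ 2 * (1 - 2 * r) * (1 / p + 1) ≤ 0 :=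
      mul_nonpos_of_nonpos_of_nonneg (mul_nonpos_of_nonneg_of_nonpos (sq_nonneg s) hneg)
        (by positivity)
    nlinarith
  · have hinv : 1 / p < 1 / s ^ 2 := one_div_lt_one_div_of_lt (pow_pos hs 2) hp
    have hsq : s ^ 2 * (1 - 2 * r) * (1 / s ^ 2 + 1) = (1 - 2 * r) * (1 + s ^ 2) := by
      field_simp
    have hlt : s ^ 2 * (1 - 2 * r) * (1 / p + 1) < s ^ 2 * (1 - 2 * r) * (1 / s ^ 2 + 1) :=
      mul_lt_mul_of_pos_left (by linarith) (by positivity)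
    nlinarith

theorem strictMonoOn_rightProfile (hs : 0 < s) (hr : r < 1)
    (hlow : (1 - s) ^ 2 ≤ r * (2 * ((1 - s) ^ 2 + s))) :
    StrictMonoOn (rightProfile s r) (Set.Icc s 1) := by
  intro u ⟨hsu, _⟩ t _ hut
  have hu : 0 < u := hs.trans_le hsu
  have hprod : s ^ 2 < u * t := by nlinarith
  have hsub := rightProfile_sub (s := s) (r := r) hu.ne' (hu.trans hut).ne'
  nlinarith [mul_pos (sub_pos.mpr hut) (rightProfileSlope_pos hs hprod hr hlow)]

theorem abs_rightProfile_lt {l : ℝ} (hs : 0 < s) (hr : r < 1)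
    (hlow : (1 - s) ^ 2 ≤ r * (2 * ((1 - s) ^ 2 + s))) (hsl : s < l) (hl : l ≤ 1) :
    |rightProfile s r l| < |rightProfile s r s| := by
  have hmono := strictMonoOn_rightProfile hs hr hlow
  have hleft : rightProfile s r s < rightProfile s r l :=
    hmono ⟨le_rfl, (hsl.trans_le hl).le⟩ ⟨hsl.le, hl⟩ hsl
  have hright : rightProfile s r l ≤ 0 :=
    rightProfile_one (s := s) (r := r) ▸
      hmono.monotoneOn ⟨hsl.le, hl⟩ ⟨(hsl.trans_le hl).le, le_rfl⟩ hl
  rw [abs_of_nonpos hright, abs_of_neg (hleft.trans_le hright)]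
  linarith

end KendallCusum

open KendallCusum in
/-- Under a single change-point at relative position `λ* ∈ (0,1)` with
`τ_F ≠ τ_G` and `(1−λ*)²/(2((1−λ*)²+λ*)) ≤ (τ_FG − τ_F)/(τ_G − τ_F) < 1`, the limiting mean
function `c` of the weighted Kendall's-tau CUSUM process satisfies `|c(λ)| < |c(λ*)|` for
every `λ ∈ [0,1]` with `λ ≠ λ*`; i.e. `|c|` has its unique maximum at `λ*`. -/
theorem cusum_limit_unique_maximizer
    (lstar τF τG τFG : ℝ)
    (h0 : 0 < lstar) (h1 : lstar < 1) (hne : τF ≠ τG)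
    (hlow : (1 - lstar) ^ 2 / (2 * ((1 - lstar) ^ 2 + lstar)) ≤ (τFG - τF) / (τG - τF))
    (hhigh : (τFG - τF) / (τG - τF) < 1)
    (c : ℝ → ℝ)
    (hc₁ : ∀ l : ℝ, 0 ≤ l → l < lstar →
      c l = ((1 - lstar ^ 2) * τF - (1 - lstar) ^ 2 * τG - 2 * lstar * (1 - lstar) * τFG) * l)
    (hc₂ : ∀ l : ℝ, lstar ≤ l → l ≤ 1 →
      c l = 2 * lstar * (τFG - τG) * (1 - l)
            + lstar ^ 2 * (τF + τG - 2 * τFG) * (1 / l - l)) :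
    ∀ l ∈ Set.Icc (0 : ℝ) 1, l ≠ lstar → |c l| < |c lstar| := by
  have hd : τG - τF ≠ 0 := sub_ne_zero.mpr hne.symm
  set r := (τFG - τF) / (τG - τF) with hr
  have hτFG : τFG = τF + r * (τG - τF) := by rw [hr, div_mul_cancel₀ _ hd]; ring
  have hD : 0 < 2 * ((1 - lstar) ^ 2 + lstar) := by positivity
  have hlow' : (1 - lstar) ^ 2 ≤ r * (2 * ((1 - lstar) ^ 2 + lstar)) := (div_le_iff₀ hD).mp hlow
  have hrpos : 0 < r := (div_pos (pow_pos (sub_pos.mpr h1) 2) hD).trans_le hlow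
  have hcR : ∀ l, lstar ≤ l → l ≤ 1 → c l = (τG - τF) * rightProfile lstar r l := by
    intro l hl hl1
    have : l ≠ 0 := (h0.trans_le hl).ne'
    rw [hc₂ l hl hl1, rightProfile, hτFG]
    field_simp
    ring
  set a := -((τG - τF) * ((1 - lstar) * (1 - lstar + 2 * lstar * r)))
  have ha : a ≠ 0 := neg_ne_zero.mpr (mul_ne_zero hd (by positivity))
  have hcstar : c lstar = a * lstar := by
    rw [hcR lstar le_rfl h1.le, rightProfile_self h0.ne']
    ring
  rintro l ⟨hl0, hl1⟩ hl
  rcases hl.lt_or_gt with hlt | hgt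
  · have hcl : c l = a * l := by rw [hc₁ l hl0 hlt, hτFG]; ring
    rw [hcl, hcstar, abs_mul, abs_mul, abs_of_nonneg hl0, abs_of_pos h0]
    exact mul_lt_mul_of_pos_left hlt (abs_pos.mpr ha)
  · rw [hcR l hgt.le hl1, hcR lstar le_rfl h1.le, abs_mul, abs_mul]
    exact mul_lt_mul_of_pos_left (abs_rightProfile_lt h0 hhigh hlow' hgt hl1) (abs_pos.mpr hd)
end

section
/- Let (X₁,Y₁),…,(X_n,Y_n) be points in ℝ², let F : ℝ² → [0,1] be a bivariate distribution function with marginals F_X, F_Y satisfying the Fréchet bounds max(F_X(x)+F_Y(y)−1, 0) ≤ F(x,y) ≤ min(F_X(x), F_Y(y)), let τ ∈ [−1,1] and τ̂_n ∈ [−1,1], and let 𝔽_n, 𝔽_{X,n}, 𝔽_{Y,n} denote the empirical distribution functions of ((X_i,Y_i))_{i≤n}, (X_i)_{i≤n}, (Y_i)_{i≤n}. Define ψ(x,y) = 2F(x,y) − F_X(x) − F_Y(y) + 1 − τ and ψ̂_{n,i} = 2𝔽_n(X_i,Y_i) − 𝔽_{X,n}(X_i) − 𝔽_{Y,n}(Y_i)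 + 1 − τ̂_n. Then for every j ∈ {0,1,…,n−1}: | Σ_{i=1}^{n−j} ( ψ̂_{n,i} ψ̂_{n,i+j} − ψ(X_i,Y_i) ψ(X_{i+j},Y_{i+j}) ) | ≤ 6 n ( 4 sup_{x,y∈ℝ} |𝔽_n(x,y) − F(x,y)| + |τ̂_n − τ| ). -/
open Finset

lemma aux_div {c SA SB SAB : ℝ} (hc : 0 < c) (h : SA + SB ≤ SAB + c) :
    (1/c)*SA + (1/c)*SB - 1 ≤ (1/c)*SAB := by
  have h0 : 0 ≤ (1/c) * ((SAB + c) - (SA + SB)) :=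
    mul_nonneg (by positivity) (by linarith)
  have heq : (1/c)*((SAB + c) - (SA + SB))
      = (1/c)*SAB - ((1/c)*SA + (1/c)*SB - 1) := by
    field_simp; ring
  rw [heq] at h0
  linarith

/-- Deterministic bound for replacing the true influence function
`ψ(x,y) = 2F(x,y) − F_X(x) − F_Y(y) + 1 − τ` of Kendall's tau by its empirical counterpart
`ψ̂_{n,i}` in the autocovariance sums: for every lag `0 ≤ j ≤ n−1`,
`|Σ_{i=1}^{n−j} (ψ̂_{n,i} ψ̂_{n,i+j} − ψ_i ψ_{i+j})| ≤ 6n(4 sup|𝔽_n − F| + |τ̂_n − τ|)`. -/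
theorem empirical_psi_replacement_bound
    (n : ℕ) (hn : 1 ≤ n) (X Y : ℕ → ℝ)
    (F : ℝ → ℝ → ℝ) (FX FY : ℝ → ℝ)
    (hFrange : ∀ x y : ℝ, F x y ∈ Set.Icc (0 : ℝ) 1)
    (hFXrange : ∀ x : ℝ, FX x ∈ Set.Icc (0 : ℝ) 1)
    (hFYrange : ∀ y : ℝ, FY y ∈ Set.Icc (0 : ℝ) 1)
    (hFrechetLow : ∀ x y : ℝ, max (FX x + FY y - 1) 0 ≤ F x y)
    (hFrechetHigh : ∀ x y : ℝ, F x y ≤ min (FX x) (FY y))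
    (τ τhat : ℝ) (hτ : τ ∈ Set.Icc (-1 : ℝ) 1) (hτhat : τhat ∈ Set.Icc (-1 : ℝ) 1)
    (Fn : ℝ → ℝ → ℝ) (FXn FYn : ℝ → ℝ)
    (hFn : ∀ x y : ℝ, Fn x y
      = (1 / (n : ℝ)) * ∑ i ∈ Finset.Icc 1 n, if X i ≤ x ∧ Y i ≤ y then (1 : ℝ) else 0)
    (hFXn : ∀ x : ℝ, FXn x
      = (1 / (n : ℝ)) * ∑ i ∈ Finset.Icc 1 n, if X i ≤ x then (1 : ℝ) else 0)
    (hFYn : ∀ y : ℝ, FYn y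
      = (1 / (n : ℝ)) * ∑ i ∈ Finset.Icc 1 n, if Y i ≤ y then (1 : ℝ) else 0)
    (ψ : ℝ → ℝ → ℝ) (hψ : ∀ x y : ℝ, ψ x y = 2 * F x y - FX x - FY y + 1 - τ)
    (ψhat : ℕ → ℝ)
    (hψhat : ∀ i, ψhat i = 2 * Fn (X i) (Y i) - FXn (X i) - FYn (Y i) + 1 - τhat) :
    ∀ j : ℕ, j ≤ n - 1 →
      |∑ i ∈ Finset.Icc 1 (n - j),
          (ψhat i * ψhat (i + j) - ψ (X i) (Y i) * ψ (X (i + j)) (Y (i + j)))|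
        ≤ 6 * (n : ℝ) *
            (4 * (⨆ p : ℝ × ℝ, |Fn p.1 p.2 - F p.1 p.2|) + |τhat - τ|) := by
  intro j hj
  have hnpos : (0:ℝ) < (n:ℝ) := by exact_mod_cast hn
  have hcard : (Finset.Icc 1 n).card = n := by simp
  set D := ⨆ p : ℝ × ℝ, |Fn p.1 p.2 - F p.1 p.2| with hDdef
  set E := |τhat - τ| with hEdef
  -- Fn is in [0,1]
  have hFn01 : ∀ x y : ℝ, 0 ≤ Fn x y ∧ Fn x y ≤ 1 := by
    intro x y
    rw [hFn]
    constructor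
    · apply mul_nonneg (by positivity)
      apply Finset.sum_nonneg
      intro i _; split <;> norm_num
    · have hS : ∑ i ∈ Finset.Icc 1 n, (if X i ≤ x ∧ Y i ≤ y then (1:ℝ) else 0) ≤ (n:ℝ) := by
        calc ∑ i ∈ Finset.Icc 1 n, (if X i ≤ x ∧ Y i ≤ y then (1:ℝ) else 0)
            ≤ ∑ i ∈ Finset.Icc 1 n, (1:ℝ) := by
              apply Finset.sum_le_sum; intro i _; split <;> norm_num
          _ = (n:ℝ) := by simp
      calc (1/(n:ℝ)) * ∑ i ∈ Finset.Icc 1 n, (if X i ≤ x ∧ Y i ≤ y then (1:ℝ) else 0)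
          ≤ (1/(n:ℝ)) * (n:ℝ) := by
            apply mul_le_mul_of_nonneg_left hS (by positivity)
        _ = 1 := by field_simp
  -- empirical Frechet bounds
  have hFnlow : ∀ x y : ℝ, FXn x + FYn y - 1 ≤ Fn x y := by
    intro x y
    rw [hFn, hFXn, hFYn]
    have key : ∑ i ∈ Finset.Icc 1 n,
        ((if X i ≤ x then (1:ℝ) else 0) + (if Y i ≤ y then (1:ℝ) else 0))
        ≤ ∑ i ∈ Finset.Icc 1 n, ((if X i ≤ x ∧ Y i ≤ y then (1:ℝ) else 0) + 1) := by
      apply Finset.sum_le_sum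
      intro i _
      by_cases hx : X i ≤ x <;> by_cases hy : Y i ≤ y <;> simp [hx, hy]
    rw [Finset.sum_add_distrib, Finset.sum_add_distrib, Finset.sum_const, hcard] at key
    simp only [nsmul_eq_mul, mul_one] at key
    exact aux_div hnpos (by linarith)
  have hFnhighX : ∀ x y : ℝ, Fn x y ≤ FXn x := by
    intro x y
    rw [hFn, hFXn]
    apply mul_le_mul_of_nonneg_left _ (by positivity)
    apply Finset.sum_le_sum
    intro i _
    by_cases hx : X i ≤ x <;> by_cases hy : Y i ≤ y <;> simp [hx, hy]
  have hFnhighY : ∀ x y : ℝ, Fn x y ≤ FYn y := by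
    intro x y
    rw [hFn, hFYn]
    apply mul_le_mul_of_nonneg_left _ (by positivity)
    apply Finset.sum_le_sum
    intro i _
    by_cases hx : X i ≤ x <;> by_cases hy : Y i ≤ y <;> simp [hx, hy]
  -- sup bound
  have hbdd : BddAbove (Set.range fun p : ℝ × ℝ => |Fn p.1 p.2 - F p.1 p.2|) := by
    refine ⟨1, ?_⟩
    rintro r ⟨p, rfl⟩
    have h1 := hFn01 p.1 p.2
    have h2 := hFrange p.1 p.2
    rw [Set.mem_Icc] at h2
    rw [abs_le]
    constructor <;> [linarith [h1.1, h2.2]; linarith [h1.2, h2.1]]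
  have hDle : ∀ x y : ℝ, |Fn x y - F x y| ≤ D := fun x y => le_ciSup hbdd (x, y)
  have hD0 : 0 ≤ D := le_trans (abs_nonneg _) (hDle 0 0)
  have hE0 : 0 ≤ E := abs_nonneg _
  -- max points
  have hne : (Finset.Icc 1 n).Nonempty := Finset.nonempty_Icc.mpr hn
  set xM := ((Finset.Icc 1 n).image X).max' (hne.image X) with hxMdef
  set yM := ((Finset.Icc 1 n).image Y).max' (hne.image Y) with hyMdef
  have hxM : ∀ i ∈ Finset.Icc 1 n, X i ≤ xM := fun i hi =>
    Finset.le_max' _ _ (Finset.mem_image_of_mem X hi)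
  have hyM : ∀ i ∈ Finset.Icc 1 n, Y i ≤ yM := fun i hi =>
    Finset.le_max' _ _ (Finset.mem_image_of_mem Y hi)
  have hFnX : ∀ x : ℝ, Fn x yM = FXn x := by
    intro x
    rw [hFn, hFXn]
    congr 1
    apply Finset.sum_congr rfl
    intro i hi
    rw [if_congr (and_iff_left (hyM i hi)) rfl rfl]
  have hFnY : ∀ y : ℝ, Fn xM y = FYn y := by
    intro y
    rw [hFn, hFYn]
    congr 1
    apply Finset.sum_congr rfl
    intro i hi
    rw [if_congr (and_iff_right (hxM i hi)) rfl rfl]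
  have hFn1 : Fn xM yM = 1 := by
    rw [hFn]
    have hS : ∑ i ∈ Finset.Icc 1 n, (if X i ≤ xM ∧ Y i ≤ yM then (1:ℝ) else 0) = (n:ℝ) := by
      rw [Finset.sum_congr rfl (fun i hi => if_pos ⟨hxM i hi, hyM i hi⟩)]
      simp
    rw [hS]; field_simp
  have hFYyM : 1 - D ≤ FY yM := by
    have h1 := hDle xM yM
    rw [hFn1, abs_le] at h1
    have h2 := le_trans (hFrechetHigh xM yM) (min_le_right _ _)
    linarith [h1.1]
  have hFXxM : 1 - D ≤ FX xM := by
    have h1 := hDle xM yM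
    rw [hFn1, abs_le] at h1
    have h2 := le_trans (hFrechetHigh xM yM) (min_le_left _ _)
    linarith [h1.1]
  -- marginal closeness
  have hFXclose : ∀ x : ℝ, |FXn x - FX x| ≤ 2*D := by
    intro x
    have h1 := hDle x yM
    rw [hFnX x, abs_le] at h1
    have h2 : F x yM ≤ FX x := le_trans (hFrechetHigh x yM) (min_le_left _ _)
    have h3 : FX x + FY yM - 1 ≤ F x yM := le_trans (le_max_left _ _) (hFrechetLow x yM)
    rw [abs_le]
    constructor <;> linarith [hFYyM]
  have hFYclose : ∀ y : ℝ, |FYn y - FY y| ≤ 2*D := by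
    intro y
    have h1 := hDle xM y
    rw [hFnY y, abs_le] at h1
    have h2 : F xM y ≤ FY y := le_trans (hFrechetHigh xM y) (min_le_right _ _)
    have h3 : FX xM + FY y - 1 ≤ F xM y := le_trans (le_max_left _ _) (hFrechetLow xM y)
    rw [abs_le]
    constructor <;> linarith [hFXxM]
  -- bounds on ψ and ψhat
  obtain ⟨hτ1, hτ2⟩ := hτ
  obtain ⟨hτh1, hτh2⟩ := hτhat
  have hψbd : ∀ x y : ℝ, |ψ x y| ≤ 2 := by
    intro x y
    rw [hψ, abs_le]
    obtain ⟨hF0, hF1⟩ := hFrange x y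
    have h1 : FX x + FY y - 1 ≤ F x y := le_trans (le_max_left _ _) (hFrechetLow x y)
    have h2 : F x y ≤ FX x := le_trans (hFrechetHigh x y) (min_le_left _ _)
    have h3 : F x y ≤ FY y := le_trans (hFrechetHigh x y) (min_le_right _ _)
    constructor <;> linarith
  have hψhatbd : ∀ i : ℕ, |ψhat i| ≤ 2 := by
    intro i
    rw [hψhat, abs_le]
    have h1 := hFn01 (X i) (Y i)
    have h4 := hFnlow (X i) (Y i)
    have h5 := hFnhighX (X i) (Y i)
    have h6 := hFnhighY (X i) (Y i)
    constructor <;> linarith [h1.1, h1.2]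
  -- difference bound
  have hE1 : τhat - τ ≤ E := le_abs_self _
  have hE2 : -(E) ≤ τhat - τ := neg_abs_le _
  have hdiff : ∀ i : ℕ, |ψhat i - ψ (X i) (Y i)| ≤ 6*D + E := by
    intro i
    rw [hψhat, hψ, abs_le]
    have h1 := hDle (X i) (Y i); rw [abs_le] at h1
    have h2 := hFXclose (X i); rw [abs_le] at h2
    have h3 := hFYclose (Y i); rw [abs_le] at h3
    constructor <;> linarith [h1.1, h1.2, h2.1, h2.2, h3.1, h3.2]
  -- termwise bound
  have hterm : ∀ i : ℕ,
      |ψhat i * ψhat (i + j) - ψ (X i) (Y i) * ψ (X (i + j)) (Y (i + j))| ≤ 24*D + 4*E := by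
    intro i
    have heq : ψhat i * ψhat (i + j) - ψ (X i) (Y i) * ψ (X (i + j)) (Y (i + j))
        = ψhat i * (ψhat (i + j) - ψ (X (i + j)) (Y (i + j)))
          + ψ (X (i + j)) (Y (i + j)) * (ψhat i - ψ (X i) (Y i)) := by ring
    rw [heq]
    calc |ψhat i * (ψhat (i + j) - ψ (X (i + j)) (Y (i + j)))
          + ψ (X (i + j)) (Y (i + j)) * (ψhat i - ψ (X i) (Y i))|
        ≤ |ψhat i * (ψhat (i + j) - ψ (X (i + j)) (Y (i + j)))|
          + |ψ (X (i + j)) (Y (i + j)) * (ψhat i - ψ (X i) (Y i))| := abs_add_le _ _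
      _ = |ψhat i| * |ψhat (i + j) - ψ (X (i + j)) (Y (i + j))|
          + |ψ (X (i + j)) (Y (i + j))| * |ψhat i - ψ (X i) (Y i)| := by
            rw [abs_mul, abs_mul]
      _ ≤ 2 * (6*D + E) + 2 * (6*D + E) := by
            apply add_le_add
            · exact mul_le_mul (hψhatbd i) (hdiff (i+j)) (abs_nonneg _) (by norm_num)
            · exact mul_le_mul (hψbd _ _) (hdiff i) (abs_nonneg _) (by norm_num)
      _ = 24*D + 4*E := by ring
  -- sum up
  calc |∑ i ∈ Finset.Icc 1 (n - j),
          (ψhat i * ψhat (i + j) - ψ (X i) (Y i) * ψ (X (i + j)) (Y (i + j)))|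
      ≤ ∑ i ∈ Finset.Icc 1 (n - j),
          |ψhat i * ψhat (i + j) - ψ (X i) (Y i) * ψ (X (i + j)) (Y (i + j))| :=
        Finset.abs_sum_le_sum_abs _ _
    _ ≤ ∑ i ∈ Finset.Icc 1 (n - j), (24*D + 4*E) :=
        Finset.sum_le_sum fun i _ => hterm i
    _ = ((n - j : ℕ) : ℝ) * (24*D + 4*E) := by
        rw [Finset.sum_const, Nat.card_Icc]
        simp only [Nat.add_sub_cancel, nsmul_eq_mul]
    _ ≤ (n : ℝ) * (24*D + 4*E) := by
        apply mul_le_mul_of_nonneg_right _ (by linarith)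
        exact_mod_cast Nat.sub_le n j
    _ ≤ 6 * (n : ℝ) * (4*D + E) := by nlinarith
end

section
/- Let F, G : ℝ² → ℝ be functions that are each non-decreasing in each argument, and assume F satisfies |F(s,t) − F(s′,t′)| ≤ |s − s′| + |t − t′| for all s, s′, t, t′ ∈ ℝ. For n ≥ 1 set W(s,t) = √n (G(s,t) − F(s,t)). Then for all s ≤ s″ ≤ s′ and t ≤ t″ ≤ t′: |W(s″,t″) − W(s,t)| ≤ |W(s′,t′) − W(s,t)| + √n (|s − s′| + |t − t′|). -/
/-- Deterministic increment inequality for the rescaled bivariate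
empirical process `W = √n (G − F)`, where `G` is non-decreasing in each argument and
`F` is non-decreasing in each argument and Lipschitz with constant 1 in each variable. -/
theorem empirical_process_increment_inequality
    (F G : ℝ → ℝ → ℝ)
    (hFmono₁ : ∀ t, Monotone fun s => F s t) (hFmono₂ : ∀ s, Monotone fun t => F s t)
    (hGmono₁ : ∀ t, Monotone fun s => G s t) (hGmono₂ : ∀ s, Monotone fun t => G s t)
    (hFlip : ∀ s s' t t' : ℝ, |F s t - F s' t'| ≤ |s - s'| + |t - t'|)
    (n : ℕ) (hn : 1 ≤ n)
    (W : ℝ → ℝ → ℝ) (hW : ∀ s t, W s t = Real.sqrt n * (G s t - F s t)) :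
    ∀ s s'' s' t t'' t' : ℝ, s ≤ s'' → s'' ≤ s' → t ≤ t'' → t'' ≤ t' →
      |W s'' t'' - W s t| ≤ |W s' t' - W s t| + Real.sqrt n * (|s - s'| + |t - t'|) := by
  intro s s'' s' t t'' t' hs1 hs2 ht1 ht2
  set L : ℝ := |s - s'| + |t - t'| with hL
  set a : ℝ := G s'' t'' - G s t with ha
  set b : ℝ := G s' t' - G s t with hb
  set c : ℝ := F s'' t'' - F s t with hc
  set d : ℝ := F s' t' - F s t with hd
  have hsqrt : (0:ℝ) ≤ Real.sqrt n := Real.sqrt_nonneg n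
  have habs : |s - s''| + |t - t''| ≤ L := by
    have h1 : |s - s''| ≤ |s - s'| := by
      rw [abs_of_nonpos (by linarith), abs_of_nonpos (by linarith)]; linarith
    have h2 : |t - t''| ≤ |t - t'| := by
      rw [abs_of_nonpos (by linarith), abs_of_nonpos (by linarith)]; linarith
    linarith
  have habs2 : |s'' - s'| + |t'' - t'| ≤ L := by
    have h1 : |s'' - s'| ≤ |s - s'| := by
      rw [abs_of_nonpos (by linarith), abs_of_nonpos (by linarith)]; linarith
    have h2 : |t'' - t'| ≤ |t - t'| := by
      rw [abs_of_nonpos (by linarith), abs_of_nonpos (by linarith)]; linarith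
    linarith
  have hcL : |c| ≤ L := by
    have h := hFlip s'' s t'' t
    rw [abs_sub_comm s'' s, abs_sub_comm t'' t] at h
    exact le_trans h habs
  have hdcL : |d - c| ≤ L := by
    have : |F s' t' - F s'' t''| ≤ |s' - s''| + |t' - t''| := hFlip s' s'' t' t''
    have heq : d - c = F s' t' - F s'' t'' := by simp only [hd, hc]; ring
    rw [heq]
    refine le_trans this ?_
    simpa [abs_sub_comm] using habs2
  have hanonneg : 0 ≤ a := by
    have h1 : G s t ≤ G s'' t := hGmono₁ t hs1
    have h2 : G s'' t ≤ G s'' t'' := hGmono₂ s'' ht1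
    simp only [ha]; linarith
  have hab : a ≤ b := by
    have h1 : G s'' t'' ≤ G s' t'' := hGmono₁ t'' hs2
    have h2 : G s' t'' ≤ G s' t' := hGmono₂ s' ht2
    simp only [ha, hb]; linarith
  have key : |a - c| ≤ |b - d| + L := by
    rw [abs_le]
    constructor
    · have h1 : c - a ≤ c := by linarith
      have h2 : c ≤ |c| := le_abs_self c
      have h3 : 0 ≤ |b - d| := abs_nonneg _
      linarith
    · have h1 : a - c ≤ b - c := by linarith
      have h2 : b - c = (b - d) + (d - c) := by ring
      have h3 : b - d ≤ |b - d| := le_abs_self _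
      have h4 : d - c ≤ |d - c| := le_abs_self _
      linarith
  have e1 : W s'' t'' - W s t = Real.sqrt n * (a - c) := by
    rw [hW, hW]; simp only [ha, hc]; ring
  have e2 : W s' t' - W s t = Real.sqrt n * (b - d) := by
    rw [hW, hW]; simp only [hb, hd]; ring
  rw [e1, e2, abs_mul, abs_mul, abs_of_nonneg hsqrt, ← mul_add]
  exact mul_le_mul_of_nonneg_left key hsqrt
end

section
/- Let F : ℝ² → [0,1] be a bivariate distribution function that is Lipschitz continuous with constant C, i.e. |F(x,y) − F(x′,y′)| ≤ C(|x − x′| + |y − y′|) for all points, and let (X₁,Y₁) and (X₂,Y₂) be independent random vectors each with distribution function F. Let h be the Kendall kernel. Then there exists a constant L > 0 (depending only on C) such that for every ε > 0: E[ sup { |h((x₁,y₁),(x₂,y₂)) − h((X₁,Y₁),(X₂,Y₂))| : (x₁,y₁,x₂,y₂) ∈ ℝ⁴, |(x₁,y₁,x₂,y₂) − (X₁,Y₁,X₂,Y₂)|₂ ≤ ε } ] ≤ L ε, where |·|₂ is the Euclidean norm on ℝ⁴. In other words, the Kendall kernel satisfies the variation condition with respect to F. -/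
open MeasureTheory

/-- The Euclidean norm of the difference of two points of `ℝ² × ℝ² ≅ ℝ⁴`. -/
noncomputable def euclDist4 (w z : (ℝ × ℝ) × (ℝ × ℝ)) : ℝ :=
  Real.sqrt ((w.1.1 - z.1.1) ^ 2 + (w.1.2 - z.1.2) ^ 2
    + (w.2.1 - z.2.1) ^ 2 + (w.2.2 - z.2.2) ^ 2)

/-!
If `|X₂ − X₁| > 2ε` and `|Y₂ − Y₁| > 2ε`, moving the four coordinates by at most `ε` changes
neither sign, so the Kendall kernel is constant on the `ε`-ball; elsewhere the oscillation is at
most `2`. Hence the expected oscillation is at most `2 P(|X₂ − X₁| ≤ 2ε or |Y₂ − Y₁| ≤ 2ε)`.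
Conditioning on `(X₁, Y₁)`, each of these events is a vertical or horizontal strip of width
`O(ε)` for `(X₂, Y₂)`, and a Lipschitz distribution function gives strips of width `d`
probability at most `C d`.
-/

open Set

lemma sign_eq_of_abs_sub_lt {α : Type*} [Field α] [LinearOrder α] [IsStrictOrderedRing α]
    {d d' : α} (h : |d' - d| < |d|) : SignType.sign d' = SignType.sign d := by
  have h' := abs_sub_lt_iff.mp h
  rcases lt_trichotomy d 0 with hd | rfl | hd
  · rw [abs_of_neg hd] at h'
    rw [sign_neg hd, sign_neg (by linarith)]
  · rw [abs_zero] at h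
    exact absurd h (abs_nonneg _).not_gt
  · rw [abs_of_pos hd] at h'
    rw [sign_pos hd, sign_pos (by linarith)]

lemma kendallKernel_eq_sign (z w : ℝ × ℝ) :
    kendallKernel z w = SignType.sign ((w.1 - z.1) * (w.2 - z.2)) := by
  unfold kendallKernel
  split_ifs with hpos hneg
  · simp [sign_pos hpos]
  · simp [sign_neg hneg]
  · simp [le_antisymm (not_lt.mp hpos) (not_lt.mp hneg)]

lemma kendallKernel_eq_of_abs_sub_lt {z w z' w' : ℝ × ℝ}
    (h₁ : |(w'.1 - z'.1) - (w.1 - z.1)| < |w.1 - z.1|)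
    (h₂ : |(w'.2 - z'.2) - (w.2 - z.2)| < |w.2 - z.2|) :
    kendallKernel z' w' = kendallKernel z w := by
  simp only [kendallKernel_eq_sign, sign_mul, sign_eq_of_abs_sub_lt h₁, sign_eq_of_abs_sub_lt h₂]

lemma abs_kendallKernel_sub_le_two (z w z' w' : ℝ × ℝ) :
    |kendallKernel z w - kendallKernel z' w'| ≤ 2 := by
  unfold kendallKernel
  split_ifs <;> norm_num

lemma abs_sub_le_of_euclDist4_le {w z : (ℝ × ℝ) × (ℝ × ℝ)} {ε : ℝ} (h : euclDist4 w z ≤ ε) :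
    |w.1.1 - z.1.1| ≤ ε ∧ |w.1.2 - z.1.2| ≤ ε ∧ |w.2.1 - z.2.1| ≤ ε ∧ |w.2.2 - z.2.2| ≤ ε := by
  refine ⟨?_, ?_, ?_, ?_⟩ <;> refine (Real.abs_le_sqrt ?_).trans h <;>
    nlinarith [sq_nonneg (w.1.1 - z.1.1), sq_nonneg (w.1.2 - z.1.2),
      sq_nonneg (w.2.1 - z.2.1), sq_nonneg (w.2.2 - z.2.2)]

lemma kendallKernel_eq_of_euclDist4_le {z w : (ℝ × ℝ) × (ℝ × ℝ)} {ε : ℝ}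
    (hx : 2 * ε < |z.2.1 - z.1.1|) (hy : 2 * ε < |z.2.2 - z.1.2|) (hw : euclDist4 w z ≤ ε) :
    kendallKernel w.1 w.2 = kendallKernel z.1 z.2 := by
  obtain ⟨h₁, h₂, h₃, h₄⟩ := abs_sub_le_of_euclDist4_le hw
  have hx' : |(w.2.1 - w.1.1) - (z.2.1 - z.1.1)| ≤ 2 * ε := by
    rw [sub_sub_sub_comm]
    linarith [abs_sub (w.2.1 - z.2.1) (w.1.1 - z.1.1)]
  have hy' : |(w.2.2 - w.1.2) - (z.2.2 - z.1.2)| ≤ 2 * ε := by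
    rw [sub_sub_sub_comm]
    linarith [abs_sub (w.2.2 - z.2.2) (w.1.2 - z.1.2)]
  exact kendallKernel_eq_of_abs_sub_lt (hx'.trans_lt hx) (hy'.trans_lt hy)

noncomputable def kendallOscillation (ε : ℝ) (z : (ℝ × ℝ) × (ℝ × ℝ)) : ℝ :=
  ⨆ w : {w : (ℝ × ℝ) × (ℝ × ℝ) // euclDist4 w z ≤ ε},
    |kendallKernel w.1.1 w.1.2 - kendallKernel z.1 z.2|

lemma euclDist4_self (z : (ℝ × ℝ) × (ℝ × ℝ)) : euclDist4 z z = 0 := by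
  simp [euclDist4]

lemma kendallOscillation_nonneg (ε : ℝ) (z : (ℝ × ℝ) × (ℝ × ℝ)) :
    0 ≤ kendallOscillation ε z :=
  Real.iSup_nonneg fun _ => abs_nonneg _

lemma kendallOscillation_le_indicator {ε : ℝ} (hε : 0 ≤ ε) (z : (ℝ × ℝ) × (ℝ × ℝ)) :
    kendallOscillation ε z ≤ ({z : (ℝ × ℝ) × (ℝ × ℝ) | |z.2.1 - z.1.1| ≤ 2 * ε} ∪
      {z | |z.2.2 - z.1.2| ≤ 2 * ε}).indicator 2 z := by
  have : Nonempty {w : (ℝ × ℝ) × (ℝ × ℝ) // euclDist4 w z ≤ ε} :=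
    ⟨⟨z, (euclDist4_self z).trans_le hε⟩⟩
  by_cases hz : z ∈ {z : (ℝ × ℝ) × (ℝ × ℝ) | |z.2.1 - z.1.1| ≤ 2 * ε} ∪
      {z | |z.2.2 - z.1.2| ≤ 2 * ε}
  · rw [indicator_of_mem hz]
    exact ciSup_le fun w => abs_kendallKernel_sub_le_two _ _ _ _
  · rw [indicator_of_notMem hz]
    simp only [mem_union, mem_ofPred_eq, not_or, not_le] at hz
    refine ciSup_le fun w => ?_
    rw [kendallKernel_eq_of_euclDist4_le hz.1 hz.2 w.2, sub_self, abs_zero]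

lemma measure_fst_preimage_Ioc_le {μ : Measure (ℝ × ℝ)} [IsFiniteMeasure μ] {C a b : ℝ}
    (hab : a ≤ b) (hμ : ∀ y, μ.real (Iic b ×ˢ Iic y) - μ.real (Iic a ×ˢ Iic y) ≤ C * (b - a)) :
    μ (Prod.fst ⁻¹' Ioc a b) ≤ ENNReal.ofReal (C * (b - a)) := by
  have hunion : Prod.fst ⁻¹' Ioc a b = ⋃ n : ℕ, Ioc a b ×ˢ Iic (n : ℝ) := by
    ext p
    simp only [mem_preimage, mem_iUnion, mem_prod, mem_Iic]
    exact ⟨fun hp => ⟨⌈p.2⌉₊, hp, Nat.le_ceil _⟩, fun ⟨_, hp, _⟩ => hp⟩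
  have hmono : Monotone fun n : ℕ => Ioc a b ×ˢ Iic (n : ℝ) := fun m n hmn =>
    prod_mono_right (Iic_subset_Iic.mpr (Nat.cast_le.mpr hmn))
  rw [hunion, hmono.measure_iUnion]
  refine iSup_le fun n => ?_
  have hsub : Ioc a b ×ˢ Iic (n : ℝ) ⊆ Iic b ×ˢ Iic (n : ℝ) \ Iic a ×ˢ Iic (n : ℝ) :=
    fun p ⟨⟨hap, hpb⟩, hpn⟩ => ⟨⟨hpb, hpn⟩, fun h => h.1.not_gt hap⟩
  rw [← ofReal_measureReal]
  refine ENNReal.ofReal_le_ofReal ((measureReal_mono hsub).trans ?_)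
  rw [measureReal_sdiff (prod_mono_left (Iic_subset_Iic.mpr hab))
    (measurableSet_Iic.prod measurableSet_Iic)]
  exact hμ n

lemma measure_snd_preimage_Ioc_le {μ : Measure (ℝ × ℝ)} [IsFiniteMeasure μ] {C a b : ℝ}
    (hab : a ≤ b) (hμ : ∀ x, μ.real (Iic x ×ˢ Iic b) - μ.real (Iic x ×ˢ Iic a) ≤ C * (b - a)) :
    μ (Prod.snd ⁻¹' Ioc a b) ≤ ENNReal.ofReal (C * (b - a)) := by
  have hswap : ∀ s t : Set ℝ, MeasurableSet s → MeasurableSet t →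
      (μ.map Prod.swap).real (s ×ˢ t) = μ.real (t ×ˢ s) := fun s t hs ht => by
    rw [map_measureReal_apply measurable_swap (hs.prod ht), preimage_swap_prod]
  have h := measure_fst_preimage_Ioc_le (μ := μ.map Prod.swap) hab fun y => by
    simpa only [hswap _ _ measurableSet_Iic measurableSet_Iic] using hμ y
  rwa [Measure.map_apply measurable_swap (measurable_fst measurableSet_Ioc)] at h

lemma measure_prod_abs_sub_le {α : Type*} [MeasurableSpace α] {μ ν : Measure α}
    [IsProbabilityMeasure μ] [SFinite ν]
    {g : α → ℝ} (hg : Measurable g) {C δ : ℝ} (hδ : 0 < δ)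
    (hν : ∀ a b, a ≤ b → ν (g ⁻¹' Ioc a b) ≤ ENNReal.ofReal (C * (b - a))) :
    μ.prod ν {z | |g z.2 - g z.1| ≤ δ} ≤ ENNReal.ofReal (3 * C * δ) := by
  have hmeas : MeasurableSet {z : α × α | |g z.2 - g z.1| ≤ δ} :=
    measurableSet_le (by fun_prop) measurable_const
  have hslice : ∀ x, ν (Prod.mk x ⁻¹' {z | |g z.2 - g z.1| ≤ δ}) ≤ ENNReal.ofReal (3 * C * δ) := by
    intro x
    have hsub : Prod.mk x ⁻¹' {z | |g z.2 - g z.1| ≤ δ} ⊆ g ⁻¹' Ioc (g x - 2 * δ) (g x + δ) := by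
      intro y (hy : |g y - g x| ≤ δ)
      obtain ⟨hlo, hhi⟩ := abs_le.mp hy
      constructor <;> linarith
    calc ν (Prod.mk x ⁻¹' {z | |g z.2 - g z.1| ≤ δ})
        ≤ ENNReal.ofReal (C * (g x + δ - (g x - 2 * δ))) :=
          (measure_mono hsub).trans (hν _ _ (by linarith))
      _ = ENNReal.ofReal (3 * C * δ) := by ring_nf
  calc μ.prod ν {z | |g z.2 - g z.1| ≤ δ}
      ≤ ∫⁻ _, ENNReal.ofReal (3 * C * δ) ∂μ := by
        rw [Measure.prod_apply hmeas]
        exact lintegral_mono hslice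
    _ = ENNReal.ofReal (3 * C * δ) := by simp

lemma integral_kendallOscillation_le {μ : Measure ((ℝ × ℝ) × (ℝ × ℝ))} [IsFiniteMeasure μ]
    {ε : ℝ} (hε : 0 ≤ ε) :
    ∫ z, kendallOscillation ε z ∂μ ≤
      2 * μ.real ({z | |z.2.1 - z.1.1| ≤ 2 * ε} ∪ {z | |z.2.2 - z.1.2| ≤ 2 * ε}) := by
  have hA : MeasurableSet
      ({z : (ℝ × ℝ) × (ℝ × ℝ) | |z.2.1 - z.1.1| ≤ 2 * ε} ∪ {z | |z.2.2 - z.1.2| ≤ 2 * ε}) :=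
    (measurableSet_le (by fun_prop) measurable_const).union
      (measurableSet_le (by fun_prop) measurable_const)
  calc ∫ z, kendallOscillation ε z ∂μ
      ≤ ∫ z, ({z : (ℝ × ℝ) × (ℝ × ℝ) | |z.2.1 - z.1.1| ≤ 2 * ε} ∪
          {z | |z.2.2 - z.1.2| ≤ 2 * ε}).indicator 2 z ∂μ :=
        integral_mono_of_nonneg (ae_of_all _ (kendallOscillation_nonneg ε))
          ((integrable_const 2).indicator hA) (ae_of_all _ (kendallOscillation_le_indicator hε))
    _ = 2 * μ.real ({z | |z.2.1 - z.1.1| ≤ 2 * ε} ∪ {z | |z.2.2 - z.1.2| ≤ 2 * ε}) :=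
        (integral_indicator_const 2 hA).trans (mul_comm _ _)

lemma measureReal_prod_coord_close_le {μ ν : Measure (ℝ × ℝ)} [IsProbabilityMeasure μ]
    [IsFiniteMeasure ν] {C δ : ℝ} (hC : 0 ≤ C) (hδ : 0 < δ)
    (hfst : ∀ a b, a ≤ b → ν (Prod.fst ⁻¹' Ioc a b) ≤ ENNReal.ofReal (C * (b - a)))
    (hsnd : ∀ a b, a ≤ b → ν (Prod.snd ⁻¹' Ioc a b) ≤ ENNReal.ofReal (C * (b - a))) :
    (μ.prod ν).real ({z | |z.2.1 - z.1.1| ≤ δ} ∪ {z | |z.2.2 - z.1.2| ≤ δ}) ≤ 6 * C * δ := by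
  have h₁ : (μ.prod ν).real {z | |z.2.1 - z.1.1| ≤ δ} ≤ 3 * C * δ :=
    ENNReal.toReal_le_of_le_ofReal (by positivity) (measure_prod_abs_sub_le measurable_fst hδ hfst)
  have h₂ : (μ.prod ν).real {z | |z.2.2 - z.1.2| ≤ δ} ≤ 3 * C * δ :=
    ENNReal.toReal_le_of_le_ofReal (by positivity) (measure_prod_abs_sub_le measurable_snd hδ hsnd)
  linarith [measureReal_union_le (μ := μ.prod ν) {z | |z.2.1 - z.1.1| ≤ δ}
    {z | |z.2.2 - z.1.2| ≤ δ}]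

/-- If the bivariate distribution function `F` of the law `ν` is Lipschitz
with constant `C`, then the Kendall kernel satisfies the variation condition with respect
to `ν`: there is `L > 0` (depending only on `C`) with
`E[sup_{|(x₁,y₁,x₂,y₂) − (X₁,Y₁,X₂,Y₂)|₂ ≤ ε} |h(x,y) − h(X,Y)|] ≤ Lε` for every `ε > 0`,
where `(X₁,Y₁)` and `(X₂,Y₂)` are independent with law `ν`. -/
theorem kendall_kernel_variation_condition
    (ν : Measure (ℝ × ℝ)) [IsProbabilityMeasure ν]
    (F : ℝ → ℝ → ℝ)
    (hF : ∀ x y : ℝ, F x y = (ν {p : ℝ × ℝ | p.1 ≤ x ∧ p.2 ≤ y}).toReal)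
    (C : ℝ) (hC : 0 < C)
    (hLip : ∀ x y x' y' : ℝ, |F x y - F x' y'| ≤ C * (|x - x'| + |y - y'|)) :
    ∃ L : ℝ, 0 < L ∧ ∀ ε : ℝ, 0 < ε →
      ∫ z : (ℝ × ℝ) × (ℝ × ℝ),
          (⨆ w : {w : (ℝ × ℝ) × (ℝ × ℝ) // euclDist4 w z ≤ ε},
            |kendallKernel w.1.1 w.1.2 - kendallKernel z.1 z.2|) ∂(ν.prod ν)
        ≤ L * ε := by
  have hcdf : ∀ x y, ν.real (Iic x ×ˢ Iic y) = F x y := fun x y => (hF x y).symm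
  have hLip_le : ∀ x y x' y', F x y - F x' y' ≤ C * (|x - x'| + |y - y'|) :=
    fun x y x' y' => (le_abs_self _).trans (hLip x y x' y')
  have hfst : ∀ a b, a ≤ b → ν (Prod.fst ⁻¹' Ioc a b) ≤ ENNReal.ofReal (C * (b - a)) :=
    fun a b hab => measure_fst_preimage_Ioc_le hab fun y => by
      rw [hcdf, hcdf]
      simpa [abs_of_nonneg (sub_nonneg.mpr hab)] using hLip_le b y a y
  have hsnd : ∀ a b, a ≤ b → ν (Prod.snd ⁻¹' Ioc a b) ≤ ENNReal.ofReal (C * (b - a)) :=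
    fun a b hab => measure_snd_preimage_Ioc_le hab fun x => by
      rw [hcdf, hcdf]
      simpa [abs_of_nonneg (sub_nonneg.mpr hab)] using hLip_le x b x a
  refine ⟨24 * C, by positivity, fun ε hε => ?_⟩
  calc ∫ z, kendallOscillation ε z ∂(ν.prod ν)
      ≤ 2 * (ν.prod ν).real ({z | |z.2.1 - z.1.1| ≤ 2 * ε} ∪ {z | |z.2.2 - z.1.2| ≤ 2 * ε}) :=
        integral_kendallOscillation_le hε.le
    _ ≤ 2 * (6 * C * (2 * ε)) := by
        gcongr
        exact measureReal_prod_coord_close_le hC.le (by positivity) hfst hsnd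
    _ = 24 * C * ε := by ring
end

section
/- Let F be a Borel probability measure on ℝ^q, let g : ℝ^q × ℝ^q → ℝ be a bounded, measurable, symmetric kernel satisfying the variation condition with respect to F with constants L, ε₀ > 0, and let u = E g(X,Y) and g₁(x) = E g(x,X) − u for X, Y independent with law F. Then the degenerate kernel g₂(x,y) = g(x,y) − g₁(x) − g₁(y) − u also satisfies the variation condition with respect to F, with constants 3L and ε₀; that is, for all ε ∈ (0,ε₀): E[ sup_{|(x,y)−(X,Y)|₂ ≤ ε} |g₂(x,y) − g₂(X,Y)| ] ≤ 3Lε. Moreover, the linear part g₁ satisfies E[ sup_{|x−X|₂ ≤ ε} |g₁(x) − g₁(X)| ] ≤ Lε for all ε ∈ (0,ε₀). -/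
/-! The oscillation of `g₁` at `x` is at most the `F`-average over `y` of the oscillation of
`g` at `(x, y)`, and `g₂` differs from `g` by two copies of `g₁`; integrating gives `L` and `3L`.

The real difficulty is measurability. The supremum of `|g(w) - g(z)|` over an open ball
around `z` is measurable in `z`; over a closed ball it need not be, and the Bochner integral of
a non-measurable function is `0`, so the hypothesis only constrains radii at which the
closed-ball supremum is a.e. measurable. Open balls are sandwiched between closed balls of
nearby radii, and the open- and closed-ball suprema agree a.e. at every continuity point of the
monotone function `r ↦ ∫ (open-ball supremum at radius r)`, i.e. at all but countably many
radii. -/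

open MeasureTheory

/-- The Euclidean (`ℝ^{2q}`) distance between two points of `ℝ^q × ℝ^q`, where `ℝ^q`
carries the Euclidean norm. -/
noncomputable def pairDist {q : ℕ}
    (w z : EuclideanSpace ℝ (Fin q) × EuclideanSpace ℝ (Fin q)) : ℝ :=
  Real.sqrt (dist w.1 z.1 ^ 2 + dist w.2 z.2 ^ 2)

open Set Filter

lemma le_mul_of_forall_mem_Ioo {X c a b : ℝ} (hab : a < b)
    (h : ∀ s ∈ Ioo a b, X ≤ c * s) : X ≤ c * a :=
  ge_of_tendsto (((continuous_const_mul c).tendsto a).mono_left nhdsWithin_le_nhds)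
    (eventually_of_mem (Ioo_mem_nhdsGT hab) h)

section Oscillation

variable {α : Type*} (d : α → α → ℝ) (G : α → ℝ)

noncomputable def openOsc (r : ℝ) (z : α) : ℝ :=
  ⨆ w : {w // d w z < r}, |G w - G z|

noncomputable def closedOsc (r : ℝ) (z : α) : ℝ :=
  ⨆ w : {w // d w z ≤ r}, |G w - G z|

variable {d G} {B r : ℝ}

lemma bddAbove_range_abs_sub (hB : ∀ z, |G z| ≤ B) (z : α) (p : α → Prop) :
    BddAbove (range fun w : {w // p w} => |G w - G z|) :=
  ⟨B + B, by rintro _ ⟨w, rfl⟩; exact (abs_sub _ _).trans (add_le_add (hB _) (hB _))⟩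

lemma openOsc_nonneg (z : α) : 0 ≤ openOsc d G r z :=
  Real.iSup_nonneg fun _ => abs_nonneg _

lemma le_openOsc (hB : ∀ z, |G z| ≤ B) {z w : α} (hw : d w z < r) :
    |G w - G z| ≤ openOsc d G r z :=
  le_ciSup (bddAbove_range_abs_sub hB z _) ⟨w, hw⟩

lemma openOsc_le (hB : ∀ z, |G z| ≤ B) (z : α) : openOsc d G r z ≤ B + B :=
  Real.iSup_le (fun w => (abs_sub _ _).trans (add_le_add (hB _) (hB _)))
    (by linarith [(abs_nonneg _).trans (hB z)])

lemma openOsc_mono (hB : ∀ z, |G z| ≤ B) {r r' : ℝ} (h : r ≤ r') (z : α) :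
    openOsc d G r z ≤ openOsc d G r' z :=
  Real.iSup_le (fun w => le_openOsc hB (w.2.trans_le h)) (openOsc_nonneg z)

lemma openOsc_le_closedOsc (hB : ∀ z, |G z| ≤ B) (z : α) :
    openOsc d G r z ≤ closedOsc d G r z :=
  Real.iSup_le (fun w => le_ciSup (bddAbove_range_abs_sub hB z fun w => d w z ≤ r) ⟨w, w.2.le⟩)
    (Real.iSup_nonneg fun _ => abs_nonneg _)

lemma closedOsc_le_openOsc (hB : ∀ z, |G z| ≤ B) {r r' : ℝ} (h : r < r') (z : α) :
    closedOsc d G r z ≤ openOsc d G r' z :=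
  Real.iSup_le (fun w => le_openOsc hB (w.2.trans_lt h)) (openOsc_nonneg z)

lemma openOsc_preimage_Ioi (hB : ∀ z, |G z| ≤ B) {t : ℝ} (ht : 0 ≤ t) :
    openOsc d G r ⁻¹' Ioi t = {z | ∃ w, d w z < r ∧ t < |G w - G z|} := by
  ext z
  refine ⟨fun h => ?_, fun ⟨w, hw, htw⟩ => htw.trans_le (le_openOsc hB hw)⟩
  rcases isEmpty_or_nonempty {w // d w z < r} with hempty | hne
  · exact absurd (h.trans_eq (Real.iSup_of_isEmpty _)) (not_lt.mpr ht)
  · obtain ⟨⟨w, hwz⟩, hw⟩ := exists_lt_of_lt_ciSup (show t < openOsc d G r z from h)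
    exact ⟨w, hwz, hw⟩

variable [TopologicalSpace α] [MeasurableSpace α] [OpensMeasurableSpace α]

/-- Whether `t < |G w - G z|` for some `w` near `z` is decided by a rational `s` separating
`G z` from `G w ∓ t`; for each `s` this is an open condition on `z` intersected with a
measurable one. -/
lemma measurableSet_exists_lt_abs_sub (hd : ∀ w, Continuous (d w)) (hG : Measurable G)
    (t : ℝ) : MeasurableSet {z | ∃ w, d w z < r ∧ t < |G w - G z|} := by
  have hopen : ∀ P : α → Prop, IsOpen {z | ∃ w, d w z < r ∧ P w} := fun P => by
    have : {z | ∃ w, d w z < r ∧ P w} = ⋃ (w) (_ : P w), d w ⁻¹' Iio r := by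
      ext; simp [and_comm]
    rw [this]
    exact isOpen_biUnion fun w _ => isOpen_Iio.preimage (hd w)
  have : {z | ∃ w, d w z < r ∧ t < |G w - G z|} = ⋃ s : ℚ,
      (G ⁻¹' Iio s ∩ {z | ∃ w, d w z < r ∧ s + t < G w}) ∪
        (G ⁻¹' Ioi s ∩ {z | ∃ w, d w z < r ∧ G w < s - t}) := by
    ext z
    simp only [mem_ofPred_eq, mem_iUnion, mem_union, mem_inter_iff, mem_preimage, mem_Iio,
      mem_Ioi]
    constructor
    · rintro ⟨w, hw, htw⟩
      rcases lt_abs.mp htw with h | h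
      · obtain ⟨s, hzs, hsw⟩ := exists_rat_btwn (show G z < G w - t by linarith)
        exact ⟨s, .inl ⟨hzs, w, hw, by linarith⟩⟩
      · obtain ⟨s, hws, hsz⟩ := exists_rat_btwn (show G w + t < G z by linarith)
        exact ⟨s, .inr ⟨hsz, w, hw, by linarith⟩⟩
    · rintro ⟨s, ⟨hzs, w, hw, hsw⟩ | ⟨hsz, w, hw, hws⟩⟩
      · exact ⟨w, hw, lt_abs.mpr (.inl (by linarith))⟩
      · exact ⟨w, hw, lt_abs.mpr (.inr (by linarith))⟩
  rw [this]
  exact .iUnion fun s => ((hG measurableSet_Iio).inter (hopen _).measurableSet).union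
    ((hG measurableSet_Ioi).inter (hopen _).measurableSet)

lemma measurable_openOsc (hd : ∀ w, Continuous (d w)) (hG : Measurable G)
    (hB : ∀ z, |G z| ≤ B) : Measurable (openOsc d G r) := by
  refine measurable_of_Ioi fun t => ?_
  rcases lt_or_ge t 0 with ht | ht
  · convert MeasurableSet.univ
    exact eq_univ_of_forall fun z => ht.trans_le (openOsc_nonneg z)
  · rw [openOsc_preimage_Ioi hB ht]
    exact measurableSet_exists_lt_abs_sub hd hG t

variable {μ : Measure α} [IsFiniteMeasure μ]

lemma integrable_openOsc (hd : ∀ w, Continuous (d w)) (hG : Measurable G)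
    (hB : ∀ z, |G z| ≤ B) : Integrable (openOsc d G r) μ :=
  .of_bound (measurable_openOsc hd hG hB).aestronglyMeasurable (B + B) (.of_forall fun z => by
    rw [Real.norm_of_nonneg (openOsc_nonneg z)]; exact openOsc_le hB z)

lemma monotone_integral_openOsc (hd : ∀ w, Continuous (d w)) (hG : Measurable G)
    (hB : ∀ z, |G z| ≤ B) : Monotone fun r => ∫ z, openOsc d G r z ∂μ := fun _ _ h =>
  integral_mono (integrable_openOsc hd hG hB) (integrable_openOsc hd hG hB) (openOsc_mono hB h)

/-- For radii `u n ↓ s`, `closedOsc s` lies between `openOsc s` and `T = ⨅ n, openOsc (u n)`;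
continuity at `s` forces `∫ T = ∫ openOsc s`, so the sandwich collapses almost everywhere. -/
lemma closedOsc_ae_eq_openOsc (hd : ∀ w, Continuous (d w)) (hG : Measurable G)
    (hB : ∀ z, |G z| ≤ B) {s : ℝ} (hs : ContinuousAt (fun r => ∫ z, openOsc d G r z ∂μ) s) :
    closedOsc d G s =ᵐ[μ] openOsc d G s := by
  obtain ⟨u, -, hsu, hu⟩ := exists_seq_strictAnti_tendsto s
  set T := fun z => ⨅ n, openOsc d G (u n) z
  have hT_le : ∀ n z, T z ≤ openOsc d G (u n) z := fun n z =>
    ciInf_le ⟨0, by rintro _ ⟨m, rfl⟩; exact openOsc_nonneg z⟩ n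
  have hle_T : ∀ z, closedOsc d G s z ≤ T z := fun z =>
    le_ciInf fun n => closedOsc_le_openOsc hB (hsu n) z
  have hO_le_T : ∀ z, openOsc d G s z ≤ T z := fun z =>
    (openOsc_le_closedOsc hB z).trans (hle_T z)
  have hO : Integrable (openOsc d G s) μ := integrable_openOsc hd hG hB
  have hT : Integrable T μ :=
    .of_bound (Measurable.iInf fun n => measurable_openOsc hd hG hB).aestronglyMeasurable (B + B)
      (.of_forall fun z => by
        rw [Real.norm_of_nonneg ((openOsc_nonneg z).trans (hO_le_T z))]
        exact (hT_le 0 z).trans (openOsc_le hB z))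
  have hint_T : ∫ z, T z ∂μ ≤ ∫ z, openOsc d G s z ∂μ :=
    ge_of_tendsto' (hs.tendsto.comp hu) fun n =>
      integral_mono hT (integrable_openOsc hd hG hB) (hT_le n)
  have hT_ae : T - openOsc d G s =ᵐ[μ] 0 := by
    refine (integral_eq_zero_iff_of_nonneg (fun z => sub_nonneg.mpr (hO_le_T z))
      (hT.sub hO)).mp ?_
    rw [integral_sub hT hO]
    exact le_antisymm (sub_nonpos.mpr hint_T) (sub_nonneg.mpr (integral_mono hO hT hO_le_T))
  filter_upwards [hT_ae] with z hz
  exact le_antisymm ((hle_T z).trans (sub_eq_zero.mp hz).le) (openOsc_le_closedOsc hB z)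

theorem integral_openOsc_le_of_integral_closedOsc_le (hd : ∀ w, Continuous (d w))
    (hG : Measurable G) (hB : ∀ z, |G z| ≤ B) {L ε₀ : ℝ} (hL : 0 ≤ L)
    (hvar : ∀ ε, 0 < ε → ε < ε₀ → ∫ z, closedOsc d G ε z ∂μ ≤ L * ε)
    (hr : 0 < r) (hrε₀ : r < ε₀) : ∫ z, openOsc d G r z ∂μ ≤ L * r := by
  have hmono := monotone_integral_openOsc (μ := μ) hd hG hB
  refine le_mul_of_forall_mem_Ioo hrε₀ fun η hη => ?_
  obtain ⟨s, hs, hrs, hsη⟩ :=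
    (hmono.countable_not_continuousAt.dense_compl ℝ).exists_between hη.1
  calc ∫ z, openOsc d G r z ∂μ ≤ ∫ z, openOsc d G s z ∂μ := hmono hrs.le
    _ = ∫ z, closedOsc d G s z ∂μ :=
      (integral_congr_ae (closedOsc_ae_eq_openOsc hd hG hB (not_not.mp hs))).symm
    _ ≤ L * s := hvar s (hr.trans hrs) (hsη.trans hη.2)
    _ ≤ L * η := by gcongr

end Oscillation

lemma integral_add_integral_fst_add_integral_snd {α : Type*} [MeasurableSpace α]
    (μ : Measure α) [IsProbabilityMeasure μ] {f : α × α → ℝ} (hf : Integrable f (μ.prod μ)) :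
    ∫ z, (f z + ∫ y, f (z.1, y) ∂μ + ∫ y, f (z.2, y) ∂μ) ∂(μ.prod μ)
      = 3 * ∫ z, f z ∂(μ.prod μ) := by
  have hT := hf.integral_prod_left
  have hfT : Integrable (fun z => f z + ∫ y, f (z.1, y) ∂μ) (μ.prod μ) := hf.add (hT.comp_fst μ)
  rw [integral_add hfT (hT.comp_snd μ), integral_add hf (hT.comp_fst μ),
    integral_fun_fst (fun x => ∫ y, f (x, y) ∂μ), integral_fun_snd (fun x => ∫ y, f (x, y) ∂μ),
    ← integral_prod _ hf]
  simp only [probReal_univ, one_smul]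
  ring

section Product

variable {q : ℕ}

lemma continuous_pairDist (w : EuclideanSpace ℝ (Fin q) × EuclideanSpace ℝ (Fin q)) :
    Continuous (pairDist w) := by
  unfold pairDist
  fun_prop

lemma dist_fst_le_pairDist (w z : EuclideanSpace ℝ (Fin q) × EuclideanSpace ℝ (Fin q)) :
    dist w.1 z.1 ≤ pairDist w z :=
  (le_abs_self _).trans (Real.abs_le_sqrt (le_add_of_nonneg_right (sq_nonneg _)))

lemma dist_snd_le_pairDist (w z : EuclideanSpace ℝ (Fin q) × EuclideanSpace ℝ (Fin q)) :
    dist w.2 z.2 ≤ pairDist w z :=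
  (le_abs_self _).trans (Real.abs_le_sqrt (le_add_of_nonneg_left (sq_nonneg _)))

lemma pairDist_mk_left (x' x y : EuclideanSpace ℝ (Fin q)) :
    pairDist (x', y) (x, y) = dist x' x := by
  simp [pairDist, Real.sqrt_sq dist_nonneg]

variable {F : Measure (EuclideanSpace ℝ (Fin q))}
  {g : EuclideanSpace ℝ (Fin q) → EuclideanSpace ℝ (Fin q) → ℝ} {u B s : ℝ}

noncomputable def hoeffdingLinear (F : Measure (EuclideanSpace ℝ (Fin q)))
    (g : EuclideanSpace ℝ (Fin q) → EuclideanSpace ℝ (Fin q) → ℝ) (u : ℝ)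
    (x : EuclideanSpace ℝ (Fin q)) : ℝ :=
  (∫ y, g x y ∂F) - u

noncomputable def hoeffdingDegenerate (F : Measure (EuclideanSpace ℝ (Fin q)))
    (g : EuclideanSpace ℝ (Fin q) → EuclideanSpace ℝ (Fin q) → ℝ) (u : ℝ)
    (x y : EuclideanSpace ℝ (Fin q)) : ℝ :=
  g x y - hoeffdingLinear F g u x - hoeffdingLinear F g u y - u

lemma abs_hoeffdingLinear_sub_le [IsFiniteMeasure F] (hg : Measurable (Function.uncurry g))
    (hB : ∀ z, |Function.uncurry g z| ≤ B) {x x' : EuclideanSpace ℝ (Fin q)}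
    (h : dist x' x < s) :
    |hoeffdingLinear F g u x' - hoeffdingLinear F g u x|
      ≤ ∫ y, openOsc pairDist (Function.uncurry g) s (x, y) ∂F := by
  have hsec : ∀ x, Integrable (g x) F := fun x =>
    .of_bound hg.of_uncurry_left.aestronglyMeasurable B (.of_forall fun y => hB (x, y))
  have hosc : Integrable (fun y => openOsc pairDist (Function.uncurry g) s (x, y)) F :=
    .of_bound ((measurable_openOsc continuous_pairDist hg hB).comp
      measurable_prodMk_left).aestronglyMeasurable (B + B) (.of_forall fun y => by
        rw [Real.norm_of_nonneg (openOsc_nonneg _)]; exact openOsc_le hB _)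
  rw [hoeffdingLinear, hoeffdingLinear, sub_sub_sub_cancel_right,
    ← integral_sub (hsec x') (hsec x)]
  refine abs_integral_le_integral_abs.trans (integral_mono ((hsec x').sub (hsec x)).abs hosc
    fun y => le_openOsc (z := (x, y)) (w := (x', y)) hB ?_)
  rwa [pairDist_mk_left]

lemma abs_hoeffdingDegenerate_sub_le [IsFiniteMeasure F] (hg : Measurable (Function.uncurry g))
    (hB : ∀ z, |Function.uncurry g z| ≤ B)
    {w z : EuclideanSpace ℝ (Fin q) × EuclideanSpace ℝ (Fin q)} (h : pairDist w z < s) :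
    |hoeffdingDegenerate F g u w.1 w.2 - hoeffdingDegenerate F g u z.1 z.2|
      ≤ openOsc pairDist (Function.uncurry g) s z
        + ∫ y, openOsc pairDist (Function.uncurry g) s (z.1, y) ∂F
        + ∫ y, openOsc pairDist (Function.uncurry g) s (z.2, y) ∂F :=
  calc _ = |(g w.1 w.2 - g z.1 z.2) - (hoeffdingLinear F g u w.1 - hoeffdingLinear F g u z.1)
          - (hoeffdingLinear F g u w.2 - hoeffdingLinear F g u z.2)| := by
        rw [hoeffdingDegenerate, hoeffdingDegenerate]; ring_nf
    _ ≤ _ := (abs_sub _ _).trans (add_le_add_left (abs_sub _ _) _)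
    _ ≤ _ := add_le_add (add_le_add (le_openOsc hB h)
        (abs_hoeffdingLinear_sub_le hg hB ((dist_fst_le_pairDist _ _).trans_lt h)))
        (abs_hoeffdingLinear_sub_le hg hB ((dist_snd_le_pairDist _ _).trans_lt h))

lemma integral_closedOsc_hoeffdingLinear_le [IsFiniteMeasure F]
    (hg : Measurable (Function.uncurry g)) (hB : ∀ z, |Function.uncurry g z| ≤ B) {ε : ℝ}
    (hεs : ε < s) :
    ∫ x, closedOsc dist (hoeffdingLinear F g u) ε x ∂F
      ≤ ∫ z, openOsc pairDist (Function.uncurry g) s z ∂(F.prod F) := by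
  have hO : Integrable (openOsc pairDist (Function.uncurry g) s) (F.prod F) :=
    integrable_openOsc continuous_pairDist hg hB
  rw [integral_prod _ hO]
  exact integral_mono_of_nonneg (.of_forall fun x => Real.iSup_nonneg fun _ => abs_nonneg _)
    hO.integral_prod_left (.of_forall fun x => Real.iSup_le
      (fun x' => abs_hoeffdingLinear_sub_le hg hB (x'.2.trans_lt hεs))
      (integral_nonneg fun y => openOsc_nonneg _))

lemma integral_closedOsc_hoeffdingDegenerate_le [IsProbabilityMeasure F]
    (hg : Measurable (Function.uncurry g)) (hB : ∀ z, |Function.uncurry g z| ≤ B) {ε : ℝ}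
    (hεs : ε < s) :
    ∫ z, closedOsc pairDist (Function.uncurry (hoeffdingDegenerate F g u)) ε z ∂(F.prod F)
      ≤ 3 * ∫ z, openOsc pairDist (Function.uncurry g) s z ∂(F.prod F) := by
  set O := openOsc pairDist (Function.uncurry g) s
  have hO : Integrable O (F.prod F) := integrable_openOsc continuous_pairDist hg hB
  have hO_nonneg : ∀ x, 0 ≤ ∫ y, O (x, y) ∂F := fun x =>
    integral_nonneg fun y => openOsc_nonneg _
  rw [← integral_add_integral_fst_add_integral_snd F hO]
  exact integral_mono_of_nonneg (.of_forall fun z => Real.iSup_nonneg fun _ => abs_nonneg _)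
    ((hO.add (hO.integral_prod_left.comp_fst F)).add (hO.integral_prod_left.comp_snd F))
    (.of_forall fun z => Real.iSup_le
      (fun w => abs_hoeffdingDegenerate_sub_le hg hB (w.2.trans_lt hεs))
      (add_nonneg (add_nonneg (openOsc_nonneg z) (hO_nonneg _)) (hO_nonneg _)))

end Product

theorem hoeffding_parts_variation_condition_general {q : ℕ}
    (F : Measure (EuclideanSpace ℝ (Fin q))) [IsProbabilityMeasure F]
    (g : EuclideanSpace ℝ (Fin q) → EuclideanSpace ℝ (Fin q) → ℝ)
    (hmeas : Measurable (Function.uncurry g))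
    (B : ℝ) (hbdd : ∀ x y, |g x y| ≤ B)
    (L ε₀ : ℝ) (hL : 0 < L)
    (hvar : ∀ ε : ℝ, 0 < ε → ε < ε₀ →
      ∫ z : EuclideanSpace ℝ (Fin q) × EuclideanSpace ℝ (Fin q),
          (⨆ w : {w : EuclideanSpace ℝ (Fin q) × EuclideanSpace ℝ (Fin q) //
              pairDist w z ≤ ε},
            |g w.1.1 w.1.2 - g z.1 z.2|) ∂(F.prod F)
        ≤ L * ε)
    (u : ℝ)
    (g₁ : EuclideanSpace ℝ (Fin q) → ℝ) (hg₁ : ∀ x, g₁ x = (∫ y, g x y ∂F) - u)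
    (g₂ : EuclideanSpace ℝ (Fin q) → EuclideanSpace ℝ (Fin q) → ℝ)
    (hg₂ : ∀ x y, g₂ x y = g x y - g₁ x - g₁ y - u) :
    (∀ ε : ℝ, 0 < ε → ε < ε₀ →
      ∫ z : EuclideanSpace ℝ (Fin q) × EuclideanSpace ℝ (Fin q),
          (⨆ w : {w : EuclideanSpace ℝ (Fin q) × EuclideanSpace ℝ (Fin q) //
              pairDist w z ≤ ε},
            |g₂ w.1.1 w.1.2 - g₂ z.1 z.2|) ∂(F.prod F)
        ≤ 3 * L * ε)
    ∧ (∀ ε : ℝ, 0 < ε → ε < ε₀ →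
      ∫ x : EuclideanSpace ℝ (Fin q),
          (⨆ x' : {x' : EuclideanSpace ℝ (Fin q) // dist x' x ≤ ε}, |g₁ x' - g₁ x|) ∂F
        ≤ L * ε) := by
  obtain rfl : g₁ = hoeffdingLinear F g u := funext hg₁
  obtain rfl : g₂ = hoeffdingDegenerate F g u := funext₂ hg₂
  have hB : ∀ z, |Function.uncurry g z| ≤ B := fun z => hbdd z.1 z.2
  have hO : ∀ s, 0 < s → s < ε₀ →
      ∫ z, openOsc pairDist (Function.uncurry g) s z ∂(F.prod F) ≤ L * s := fun s =>
    integral_openOsc_le_of_integral_closedOsc_le continuous_pairDist hmeas hB hL.le hvar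
  refine ⟨fun ε hε hεε₀ => le_mul_of_forall_mem_Ioo hεε₀ fun s hs => ?_,
    fun ε hε hεε₀ => le_mul_of_forall_mem_Ioo hεε₀ fun s hs => ?_⟩
  · calc _ ≤ 3 * ∫ z, openOsc pairDist (Function.uncurry g) s z ∂(F.prod F) :=
          integral_closedOsc_hoeffdingDegenerate_le hmeas hB hs.1
      _ ≤ 3 * L * s := by linarith [hO s (hε.trans hs.1) hs.2]
  · exact (integral_closedOsc_hoeffdingLinear_le hmeas hB hs.1).trans
      (hO s (hε.trans hs.1) hs.2)

/-- If a bounded, measurable, symmetric kernel `g` satisfies the variation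
condition with respect to `F` with constants `L, ε₀ > 0`, then the degenerate part `g₂` of
its Hoeffding decomposition satisfies the variation condition with constants `3L, ε₀`, and
the linear part `g₁` satisfies `E[sup_{|x−X|₂ ≤ ε} |g₁(x) − g₁(X)|] ≤ Lε` for `ε ∈ (0,ε₀)`. -/
theorem hoeffding_parts_variation_condition {q : ℕ}
    (F : Measure (EuclideanSpace ℝ (Fin q))) [IsProbabilityMeasure F]
    (g : EuclideanSpace ℝ (Fin q) → EuclideanSpace ℝ (Fin q) → ℝ)
    (hsymm : ∀ x y, g x y = g y x)
    (hmeas : Measurable (Function.uncurry g))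
    (B : ℝ) (hbdd : ∀ x y, |g x y| ≤ B)
    (L ε₀ : ℝ) (hL : 0 < L) (hε₀ : 0 < ε₀)
    (hvar : ∀ ε : ℝ, 0 < ε → ε < ε₀ →
      ∫ z : EuclideanSpace ℝ (Fin q) × EuclideanSpace ℝ (Fin q),
          (⨆ w : {w : EuclideanSpace ℝ (Fin q) × EuclideanSpace ℝ (Fin q) //
              pairDist w z ≤ ε},
            |g w.1.1 w.1.2 - g z.1 z.2|) ∂(F.prod F)
        ≤ L * ε)
    (u : ℝ)
    (hu : u = ∫ p : EuclideanSpace ℝ (Fin q) × EuclideanSpace ℝ (Fin q),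
        g p.1 p.2 ∂(F.prod F))
    (g₁ : EuclideanSpace ℝ (Fin q) → ℝ) (hg₁ : ∀ x, g₁ x = (∫ y, g x y ∂F) - u)
    (g₂ : EuclideanSpace ℝ (Fin q) → EuclideanSpace ℝ (Fin q) → ℝ)
    (hg₂ : ∀ x y, g₂ x y = g x y - g₁ x - g₁ y - u) :
    (∀ ε : ℝ, 0 < ε → ε < ε₀ →
      ∫ z : EuclideanSpace ℝ (Fin q) × EuclideanSpace ℝ (Fin q),
          (⨆ w : {w : EuclideanSpace ℝ (Fin q) × EuclideanSpace ℝ (Fin q) //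
              pairDist w z ≤ ε},
            |g₂ w.1.1 w.1.2 - g₂ z.1 z.2|) ∂(F.prod F)
        ≤ 3 * L * ε)
    ∧ (∀ ε : ℝ, 0 < ε → ε < ε₀ →
      ∫ x : EuclideanSpace ℝ (Fin q),
          (⨆ x' : {x' : EuclideanSpace ℝ (Fin q) // dist x' x ≤ ε}, |g₁ x' - g₁ x|) ∂F
        ≤ L * ε) :=
  hoeffding_parts_variation_condition_general F g hmeas B hbdd L ε₀ hL hvar u g₁ hg₁ g₂ hg₂
end
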